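/- arXiv:1801.02369 — 13 statements merged into one kernel-verified Lean document; each statement's English description precedes it below -/
import Mathlib

section
/- Let R be a Bézout domain and let s, a', b, c, d' ∈ R with IsCoprime a' d'. Then there exist g, g₁, g₂, h₁, h₂ ∈ R satisfying simultaneously b·c·g − s·(a'·b·g₁ + c·d'·g₂) = 1 and b·c·g − s·(a'·c·h₁ + b·d'·h₂) = 1 if and only if the four elements a', b, c, d' are pairwise coprime (IsCoprime a' b, IsCoprime a' c, IsCoprime a' d', IsCoprime b c, IsCoprime b d', IsCoprime c d') and IsCoprime (b·c) s. -/
/-- Over a Bézout domain `R`, given `s, a', b, c, d' ∈ R` with `a'` and `d'`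
coprime, the system `b*c*g − s*(a'*b*g₁ + c*d'*g₂) = 1` and `b*c*g − s*(a'*c*h₁ + b*d'*h₂) = 1`
has a solution `(g, g₁, g₂, h₁, h₂) ∈ R⁵` iff `a', b, c, d'` are pairwise coprime and
`b*c` is coprime with `s`. -/
theorem bezout_system_solvable_iff
    {R : Type*} [CommRing R] [IsDomain R] [IsBezout R]
    (s a' b c d' : R) (had : IsCoprime a' d') :
    (∃ g g₁ g₂ h₁ h₂ : R,
        b * c * g - s * (a' * b * g₁ + c * d' * g₂) = 1 ∧
        b * c * g - s * (a' * c * h₁ + b * d' * h₂) = 1) ↔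
      ((IsCoprime a' b ∧ IsCoprime a' c ∧ IsCoprime a' d' ∧
        IsCoprime b c ∧ IsCoprime b d' ∧ IsCoprime c d') ∧ IsCoprime (b * c) s) := by
  constructor
  · rintro ⟨g, g₁, g₂, h₁, h₂, e1, e2⟩
    refine ⟨⟨⟨-(s*c*h₁), c*g - s*d'*h₂, by linear_combination e2⟩,
      ⟨-(s*b*g₁), b*g - s*d'*g₂, by linear_combination e1⟩, had,
      ⟨c*g - s*a'*g₁, -(s*d'*g₂), by linear_combination e1⟩,
      ⟨c*g - s*a'*g₁, -(s*c*g₂), by linear_combination e1⟩,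
      ⟨b*g - s*a'*h₁, -(s*b*h₂), by linear_combination e2⟩⟩,
      ⟨g, -(a'*b*g₁ + c*d'*g₂), by linear_combination e1⟩⟩
  · rintro ⟨⟨hab, hac, -, hbc, hbd, hcd⟩, hbcs⟩
    obtain ⟨u, v, huv⟩ := hbcs
    obtain ⟨x, y, hxy⟩ := (hac.mul_right had).mul_left (hbc.mul_right hbd)
    obtain ⟨p, q, hpq⟩ := (hab.mul_right had).mul_left (hbc.symm.mul_right hcd)
    refine ⟨u, -(v*x), -(v*y), p * (a'*b*(-(v*x)) + c*d'*(-(v*y))),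
      q * (a'*b*(-(v*x)) + c*d'*(-(v*y))), by linear_combination huv + s*v*hxy, ?_⟩
    linear_combination huv + s*v*hxy - s*(a'*b*(-(v*x)) + c*d'*(-(v*y)))*hpq
end

section
/- Let R be a Bézout domain, W ∈ R with W ≠ 0, and let v₁, v₂, u₁, u₂, a, b, c ∈ R satisfy u₁·v₁ = W, u₂·v₂ = W, v₁ = a·b, v₂ = a·c, and IsCoprime b c (so that a is a greatest common divisor of v₁ and v₂). Then for all f₀, f₁ ∈ R, the conditions v₂·f₁ = f₀·v₁ and u₂·f₀ = f₁·u₁ hold if and only if there exists γ ∈ R with f₀ = γ·c and f₁ = γ·b. (Equivalently, the R-module of even cocycle morphisms between the elementary matrix factorizations e_{v₁} and e_{v₂} of W is free of rank one generated by the pair (c, b).) -/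
/-- Let `R` be a Bézout domain, `W ≠ 0`, and let
`u₁*v₁ = W`, `u₂*v₂ = W`, `v₁ = a*b`, `v₂ = a*c` with `b, c` coprime (so `a` is a gcd of
`v₁, v₂`). Then a pair `(f₀, f₁)` is an even cocycle morphism `e_{v₁} → e_{v₂}`
(i.e. `v₂*f₁ = f₀*v₁` and `u₂*f₀ = f₁*u₁`) iff it is of the form `(γ*c, γ*b)` for some `γ ∈ R`:
the even cocycle module is free of rank one generated by `(c, b)`. -/
theorem even_cocycle_iff
    {R : Type*} [CommRing R] [IsDomain R] [IsBezout R]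
    (W v₁ v₂ u₁ u₂ a b c : R) (hW : W ≠ 0)
    (h₁ : u₁ * v₁ = W) (h₂ : u₂ * v₂ = W)
    (hv₁ : v₁ = a * b) (hv₂ : v₂ = a * c) (hbc : IsCoprime b c) :
    ∀ f₀ f₁ : R,
      (v₂ * f₁ = f₀ * v₁ ∧ u₂ * f₀ = f₁ * u₁) ↔ ∃ γ : R, f₀ = γ * c ∧ f₁ = γ * b := by
  have ha : a ≠ 0 := by
    rintro rfl
    simp [hv₁, ← h₁] at hW
  have hc : c ≠ 0 := by
    rintro rfl
    simp [hv₂, ← h₂] at hW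
  -- u₁ * b = u₂ * c
  have key : u₁ * b = u₂ * c := by
    have : a * (u₁ * b) = a * (u₂ * c) := by
      subst hv₁ hv₂; linear_combination h₁ - h₂
    exact mul_left_cancel₀ ha this
  intro f₀ f₁
  constructor
  · rintro ⟨e1, _⟩
    have e1' : c * f₁ = f₀ * b := by
      apply mul_left_cancel₀ ha
      rw [hv₂, hv₁] at e1
      linear_combination e1
    obtain ⟨γ, hγ⟩ : c ∣ f₀ := (hbc.symm.dvd_of_dvd_mul_left ⟨f₁, by linear_combination -e1'⟩)
    refine ⟨γ, by rw [hγ, mul_comm], ?_⟩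
    apply mul_left_cancel₀ hc
    rw [e1', hγ]; ring
  · rintro ⟨γ, rfl, rfl⟩
    constructor
    · rw [hv₂, hv₁]; ring
    · linear_combination -γ * key
end

section
/- Let R be a Bézout domain, W ∈ R with W ≠ 0, and let v₁, v₂, u₁, u₂, a, b, c, d, s, a', d' ∈ R satisfy v₁ = a·b, v₂ = a·c, u₁ = c·d, u₂ = b·d, W = a·b·c·d, a = s·a', d = s·d', and IsCoprime a' d' (so that s is a greatest common divisor of a and d). Then for all g₁₀, g₀₁ ∈ R, the conditions v₂·g₀₁ + g₁₀·u₁ = 0 and u₂·g₁₀ + g₀₁·v₁ = 0 hold if and only if there exists γ ∈ R with g₁₀ = γ·a' and g₀₁ = −(γ·d'). (Equivalently, the R-module of odd cocycle morphisms between the elementary matrix factorizations e_{v₁} and e_{v₂} of W is free of rank one generated by the pair (a', −d').) -/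
/-- Let `R` be a Bézout domain, `W ≠ 0`, and let
`v₁ = a*b`, `v₂ = a*c`, `u₁ = c*d`, `u₂ = b*d`, `W = a*b*c*d`, `a = s*a'`, `d = s*d'` with
`a', d'` coprime (so `s` is a gcd of `a` and `d`). Then a pair `(g₁₀, g₀₁)` is an odd cocycle
morphism `e_{v₁} → e_{v₂}` (i.e. `v₂*g₀₁ + g₁₀*u₁ = 0` and `u₂*g₁₀ + g₀₁*v₁ = 0`) iff it is of
the form `(γ*a', −γ*d')` for some `γ ∈ R`: the odd cocycle module is free of rank one generated
by `(a', −d')`. -/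
theorem odd_cocycle_iff
    {R : Type*} [CommRing R] [IsDomain R] [IsBezout R]
    (W v₁ v₂ u₁ u₂ a b c d s a' d' : R) (hW : W ≠ 0)
    (hv₁ : v₁ = a * b) (hv₂ : v₂ = a * c) (hu₁ : u₁ = c * d) (hu₂ : u₂ = b * d)
    (hwabcd : W = a * b * c * d)
    (ha : a = s * a') (hd : d = s * d') (had : IsCoprime a' d') :
    ∀ g₁₀ g₀₁ : R,
      (v₂ * g₀₁ + g₁₀ * u₁ = 0 ∧ u₂ * g₁₀ + g₀₁ * v₁ = 0) ↔
        ∃ γ : R, g₁₀ = γ * a' ∧ g₀₁ = -(γ * d') := by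
  have hW' := hW
  rw [hwabcd] at hW'
  have ha0 : a ≠ 0 := fun h => hW' (by rw [h]; ring)
  have hc0 : c ≠ 0 := fun h => hW' (by rw [h]; ring)
  have hs0 : s ≠ 0 := fun h => ha0 (by rw [ha, h]; ring)
  have ha'0 : a' ≠ 0 := fun h => ha0 (by rw [ha, h]; ring)
  intro g₁₀ g₀₁
  constructor
  · rintro ⟨h1, h2⟩
    rw [hv₂, hu₁] at h1
    have hcs : c * (s * (a' * g₀₁ + d' * g₁₀)) = 0 := by
      linear_combination h1 - c * g₀₁ * ha - g₁₀ * c * hd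
    have key : a' * g₀₁ + d' * g₁₀ = 0 := by
      rcases mul_eq_zero.mp hcs with h | h
      · exact absurd h hc0
      · rcases mul_eq_zero.mp h with h | h
        · exact absurd h hs0
        · exact h
    have hdvd : a' ∣ g₁₀ * d' := ⟨-g₀₁, by linear_combination key⟩
    obtain ⟨γ, hγ⟩ := had.dvd_of_dvd_mul_right hdvd
    refine ⟨γ, by linear_combination hγ, ?_⟩
    have h3 : a' * (g₀₁ + γ * d') = 0 := by linear_combination key - d' * hγ
    rcases mul_eq_zero.mp h3 with h | h
    · exact absurd h ha'0
    · linear_combination h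
  · rintro ⟨γ, rfl, rfl⟩
    subst hv₁ hv₂ hu₁ hu₂
    constructor
    · linear_combination (-(c * γ * d')) * ha + (γ * a' * c) * hd
    · linear_combination (-(b * γ * d')) * ha + (γ * a' * b) * hd
end

section
/- Let R be a Bézout domain, W ∈ R with W ≠ 0, and let v₁, v₂, u₁, u₂ ∈ R satisfy u₁·v₁ = W and u₂·v₂ = W. Consider the R-submodules of R² given by Z = {(f₀, f₁) ∈ R² | v₂·f₁ = f₀·v₁ ∧ u₂·f₀ = f₁·u₁} and B = {(v₂·y + x·u₁, u₂·x + y·v₁) | x, y ∈ R}. Then B ⊆ Z, and the quotient R-module Z ⧸ B is isomorphic to R ⧸ Ideal.span {v₁, u₁, v₂, u₂}. (Equivalently, the even morphism module Hom^0_{HMF(R,W)}(e_{v₁}, e_{v₂}) is a cyclic R-module with annihilator the principal ideal ⟨v₁, u₁, v₂, u₂⟩.) -/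
/-- Let `R` be a Bézout domain, `W ≠ 0`, `u₁*v₁ = W`, `u₂*v₂ = W`. Let
`Z ⊆ R²` be the submodule of even cocycles `{(f₀,f₁) | v₂*f₁ = f₀*v₁ ∧ u₂*f₀ = f₁*u₁}` and
`B ⊆ R²` the submodule of even coboundaries `{(v₂*y + x*u₁, u₂*x + y*v₁) | x, y ∈ R}`. Then
`B ⊆ Z` and `Z ⧸ B ≃ₗ[R] R ⧸ ⟨v₁, u₁, v₂, u₂⟩`: the even morphism module in `HMF(R,W)` is
cyclic with annihilator the principal ideal `⟨v₁, u₁, v₂, u₂⟩`. -/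
theorem even_hom_HMF_iso
    {R : Type*} [CommRing R] [IsDomain R] [IsBezout R]
    (W v₁ v₂ u₁ u₂ : R) (hW : W ≠ 0)
    (h₁ : u₁ * v₁ = W) (h₂ : u₂ * v₂ = W)
    (Z B : Submodule R (R × R))
    (hZ : ∀ p : R × R, p ∈ Z ↔ (v₂ * p.2 = p.1 * v₁ ∧ u₂ * p.1 = p.2 * u₁))
    (hB : ∀ p : R × R, p ∈ B ↔ ∃ x y : R, p = (v₂ * y + x * u₁, u₂ * x + y * v₁)) :
    B ≤ Z ∧
      Nonempty ((↥Z ⧸ (B.comap Z.subtype)) ≃ₗ[R]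
        (R ⧸ Ideal.span ({v₁, u₁, v₂, u₂} : Set R))) := by
  classical
  -- B ≤ Z
  have hBZ : B ≤ Z := by
    intro p hp
    obtain ⟨x, y, rfl⟩ := (hB p).mp hp
    rw [hZ]
    constructor
    · simp only; linear_combination x * h₂ - x * h₁
    · simp only; linear_combination y * h₂ - y * h₁
  refine ⟨hBZ, ?_⟩
  -- set up gcd data
  set d : R := IsBezout.gcd v₁ v₂ with hd_def
  obtain ⟨a₁, ha₁⟩ : d ∣ v₁ := IsBezout.gcd_dvd_left v₁ v₂
  obtain ⟨a₂, ha₂⟩ : d ∣ v₂ := IsBezout.gcd_dvd_right v₁ v₂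
  obtain ⟨r, s, hrs⟩ : ∃ a b : R, a * v₁ + b * v₂ = d := IsBezout.gcd_eq_sum v₁ v₂
  have hv₁0 : v₁ ≠ 0 := fun h => hW (by rw [← h₁, h, mul_zero])
  have hd0 : d ≠ 0 := fun h => hv₁0 (by rw [ha₁, h, zero_mul])
  have hrs1 : r * a₁ + s * a₂ = 1 := by
    have : d * (r * a₁ + s * a₂) = d * 1 := by
      linear_combination hrs - r * ha₁ - s * ha₂
    exact mul_left_cancel₀ hd0 this
  -- key : u₁ * a₁ = u₂ * a₂
  have key : u₁ * a₁ = u₂ * a₂ := by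
    have : d * (u₁ * a₁) = d * (u₂ * a₂) := by
      have := h₁.trans h₂.symm
      rw [ha₁, ha₂] at this
      linear_combination this
    exact mul_left_cancel₀ hd0 this
  set e : R := r * u₂ + s * u₁ with he_def
  have hu₁ : u₁ = a₂ * e := by
    linear_combination (-u₁) * hrs1 + r * key
  have hu₂ : u₂ = a₁ * e := by
    linear_combination (-u₂) * hrs1 - s * key
  set J : Ideal R := Ideal.span ({d, e} : Set R) with hJ_def
  set I : Ideal R := Ideal.span ({v₁, u₁, v₂, u₂} : Set R) with hI_def
  -- the two ideals agree
  have hJI : J = I := by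
    apply le_antisymm
    · rw [hJ_def, Ideal.span_le]
      intro z hz
      rcases hz with hz | hz
      · subst hz
        rw [← hrs]
        exact Ideal.add_mem _
          (Ideal.mul_mem_left _ _ (Ideal.subset_span (by simp)))
          (Ideal.mul_mem_left _ _ (Ideal.subset_span (by simp)))
      · simp only [Set.mem_singleton_iff] at hz
        subst hz
        rw [he_def]
        exact Ideal.add_mem _
          (Ideal.mul_mem_left _ _ (Ideal.subset_span (by simp)))
          (Ideal.mul_mem_left _ _ (Ideal.subset_span (by simp)))
    · rw [hI_def, Ideal.span_le]
      intro z hz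
      have hdJ : d ∈ J := Ideal.subset_span (by simp)
      have heJ : e ∈ J := Ideal.subset_span (by simp)
      rcases hz with hz | hz | hz | hz
      · subst hz; rw [ha₁]; exact Ideal.mul_mem_right _ _ hdJ
      · subst hz; rw [hu₁]; exact Ideal.mul_mem_left _ _ heJ
      · subst hz; rw [ha₂]; exact Ideal.mul_mem_right _ _ hdJ
      · simp only [Set.mem_singleton_iff] at hz
        subst hz; rw [hu₂]; exact Ideal.mul_mem_left _ _ heJ
  -- the linear functional on Z
  let L : ↥Z →ₗ[R] R :=
    { toFun := fun p => r * (p : R × R).2 + s * (p : R × R).1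
      map_add' := fun p q => by
        simp only [Submodule.coe_add, Prod.fst_add, Prod.snd_add]; ring
      map_smul' := fun c p => by
        simp only [Submodule.coe_smul, Prod.smul_fst, Prod.smul_snd, smul_eq_mul,
          RingHom.id_apply]; ring }
  -- structure of cocycles : p = (a₂ * L p, a₁ * L p)
  have hstruct : ∀ p : ↥Z, (p : R × R).1 = a₂ * L p ∧ (p : R × R).2 = a₁ * L p := by
    intro p
    obtain ⟨hp1, hp2⟩ := (hZ (p : R × R)).mp p.2
    have hcanc : a₂ * (p : R × R).2 = a₁ * (p : R × R).1 := by
      have : d * (a₂ * (p : R × R).2) = d * (a₁ * (p : R × R).1) := by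
        rw [ha₁, ha₂] at hp1
        linear_combination hp1
      exact mul_left_cancel₀ hd0 this
    constructor
    · show (p : R × R).1 = a₂ * (r * (p : R × R).2 + s * (p : R × R).1)
      linear_combination (-(p : R × R).1) * hrs1 - r * hcanc
    · show (p : R × R).2 = a₁ * (r * (p : R × R).2 + s * (p : R × R).1)
      linear_combination (-(p : R × R).2) * hrs1 + s * hcanc
  -- L is surjective
  have hLsurj : Function.Surjective L := by
    intro t
    have hmem : ((a₂ * t, a₁ * t) : R × R) ∈ Z := by
      rw [hZ]
      constructor
      · simp only; rw [ha₁, ha₂]; ring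
      · simp only; rw [hu₁, hu₂]; ring
    refine ⟨⟨(a₂ * t, a₁ * t), hmem⟩, ?_⟩
    show r * (a₁ * t) + s * (a₂ * t) = t
    linear_combination t * hrs1
  -- membership in B ↔ L p ∈ J
  have hkernel : ∀ p : ↥Z, (p : R × R) ∈ B ↔ L p ∈ J := by
    intro p
    obtain ⟨hs1, hs2⟩ := hstruct p
    constructor
    · intro hp
      obtain ⟨x, y, hxy⟩ := (hB _).mp hp
      have h1 : (p : R × R).1 = v₂ * y + x * u₁ := by rw [hxy]
      have h2 : (p : R × R).2 = u₂ * x + y * v₁ := by rw [hxy]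
      have : L p = d * y + e * x := by
        show r * (p : R × R).2 + s * (p : R × R).1 = d * y + e * x
        rw [h1, h2, ha₁, ha₂, hu₁, hu₂]
        linear_combination (d * y + e * x) * hrs1
      rw [this]
      exact Ideal.add_mem _
        (Ideal.mul_mem_right _ _ (Ideal.subset_span (by simp)))
        (Ideal.mul_mem_right _ _ (Ideal.subset_span (by simp)))
    · intro hp
      obtain ⟨b, c, hbc⟩ := Ideal.mem_span_pair.mp hp
      rw [hB]
      refine ⟨c, b, ?_⟩
      have h1 : (p : R × R).1 = v₂ * b + c * u₁ := by
        rw [hs1, ← hbc, ha₂, hu₁]; ring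
      have h2 : (p : R × R).2 = u₂ * c + b * v₁ := by
        rw [hs2, ← hbc, ha₁, hu₂]; ring
      exact Prod.ext h1 h2
  -- assemble the isomorphism
  let F : ↥Z →ₗ[R] R ⧸ J := (J : Submodule R R).mkQ.comp L
  have hFsurj : Function.Surjective F :=
    (Submodule.mkQ_surjective _).comp hLsurj
  have hker : LinearMap.ker F = B.comap Z.subtype := by
    ext p
    simp only [LinearMap.mem_ker, Submodule.mem_comap, Submodule.subtype_apply]
    rw [hkernel p]
    show (J : Submodule R R).mkQ (L p) = 0 ↔ _
    rw [Submodule.mkQ_apply, Submodule.Quotient.mk_eq_zero]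
  exact ⟨((Submodule.quotEquivOfEq _ _ hker.symm).trans
    (F.quotKerEquivOfSurjective hFsurj)).trans
    (Submodule.quotEquivOfEq (J : Submodule R R) (I : Submodule R R) (by rw [hJI]))⟩
end

section
/- Let R be a Bézout domain, W ∈ R with W ≠ 0, and let v₁, v₂, u₁, u₂ ∈ R satisfy u₁·v₁ = W and u₂·v₂ = W. Consider the R-submodules of R² given by Z' = {(g₁₀, g₀₁) ∈ R² | v₂·g₀₁ + g₁₀·u₁ = 0 ∧ u₂·g₁₀ + g₀₁·v₁ = 0} and B' = {(v₂·y − x·v₁, u₂·x − y·u₁) | x, y ∈ R}. Then B' ⊆ Z', and the quotient R-module Z' ⧸ B' is isomorphic to R ⧸ Ideal.span {v₁, u₁, v₂, u₂}. (Equivalently, the odd morphism module Hom^1_{HMF(R,W)}(e_{v₁}, e_{v₂}) is a cyclic R-module with annihilator the principal ideal ⟨v₁, u₁, v₂, u₂⟩, equal to the annihilator of the even morphism module.) -/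
/-- Let `R` be a Bézout domain, `W ≠ 0`, `u₁*v₁ = W`, `u₂*v₂ = W`. Let
`Z' ⊆ R²` be the submodule of odd cocycles `{(g₁₀,g₀₁) | v₂*g₀₁ + g₁₀*u₁ = 0 ∧
u₂*g₁₀ + g₀₁*v₁ = 0}` and `B' ⊆ R²` the submodule of odd coboundaries
`{(v₂*y − x*v₁, u₂*x − y*u₁) | x, y ∈ R}`. Then `B' ⊆ Z'` and
`Z' ⧸ B' ≃ₗ[R] R ⧸ ⟨v₁, u₁, v₂, u₂⟩`: the odd morphism module in `HMF(R,W)` is cyclic with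
annihilator the principal ideal `⟨v₁, u₁, v₂, u₂⟩`, equal to that of the even morphism module. -/
theorem odd_hom_HMF_iso
    {R : Type*} [CommRing R] [IsDomain R] [IsBezout R]
    (W v₁ v₂ u₁ u₂ : R) (hW : W ≠ 0)
    (h₁ : u₁ * v₁ = W) (h₂ : u₂ * v₂ = W)
    (Z' B' : Submodule R (R × R))
    (hZ' : ∀ p : R × R, p ∈ Z' ↔ (v₂ * p.2 + p.1 * u₁ = 0 ∧ u₂ * p.1 + p.2 * v₁ = 0))
    (hB' : ∀ p : R × R, p ∈ B' ↔ ∃ x y : R, p = (v₂ * y - x * v₁, u₂ * x - y * u₁)) :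
    B' ≤ Z' ∧
      Nonempty ((↥Z' ⧸ (B'.comap Z'.subtype)) ≃ₗ[R]
        (R ⧸ Ideal.span ({v₁, u₁, v₂, u₂} : Set R))) := by
  -- B' ≤ Z'
  have hle : B' ≤ Z' := by
    intro z hz
    obtain ⟨x, y, rfl⟩ := (hB' z).mp hz
    rw [hZ']
    constructor
    · linear_combination x * h₂ - x * h₁
    · linear_combination y * h₂ - y * h₁
  refine ⟨hle, ?_⟩
  -- nonzeroness
  have hv₁ : v₁ ≠ 0 := right_ne_zero_of_mul (h₁ ▸ hW)
  have hu₁ : u₁ ≠ 0 := left_ne_zero_of_mul (h₁ ▸ hW)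
  have hv₂ : v₂ ≠ 0 := right_ne_zero_of_mul (h₂ ▸ hW)
  -- first gcd
  set d := IsBezout.gcd v₁ v₂ with hd_def
  obtain ⟨a₁, ha₁⟩ := IsBezout.gcd_dvd_left v₁ v₂
  obtain ⟨a₂, ha₂⟩ := IsBezout.gcd_dvd_right v₁ v₂
  obtain ⟨r, s, hrs⟩ := IsBezout.gcd_eq_sum v₁ v₂
  rw [← hd_def] at ha₁ ha₂ hrs
  have hd : d ≠ 0 := left_ne_zero_of_mul (ha₁ ▸ hv₁)
  have hcop₁ : r * a₁ + s * a₂ = 1 := by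
    apply mul_left_cancel₀ hd
    rw [mul_one]
    linear_combination hrs - r * ha₁ - s * ha₂
  have ha₂0 : a₂ ≠ 0 := right_ne_zero_of_mul (ha₂ ▸ hv₂)
  have ha₁0 : a₁ ≠ 0 := right_ne_zero_of_mul (ha₁ ▸ hv₁)
  -- u₁ = a₂ * e, u₂ = e * a₁
  have huv : u₁ * a₁ = u₂ * a₂ := by
    apply mul_left_cancel₀ hd
    linear_combination u₁ * ha₁.symm + u₂ * ha₂ + h₁ - h₂
  obtain ⟨e, he⟩ : a₂ ∣ u₁ := by
    have hco : IsCoprime a₂ a₁ := ⟨s, r, by linear_combination hcop₁⟩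
    exact hco.dvd_of_dvd_mul_right ⟨u₂, by linear_combination huv⟩
  have he0 : e ≠ 0 := right_ne_zero_of_mul (he ▸ hu₁)
  have hu₂ : u₂ = e * a₁ := by
    apply mul_left_cancel₀ ha₂0
    linear_combination a₁ * he - huv
  -- second gcd
  set c := IsBezout.gcd d e with hc_def
  obtain ⟨d', hd'⟩ := IsBezout.gcd_dvd_left d e
  obtain ⟨e', he'⟩ := IsBezout.gcd_dvd_right d e
  obtain ⟨p, q, hpq⟩ := IsBezout.gcd_eq_sum d e
  rw [← hc_def] at hd' he' hpq
  have hc : c ≠ 0 := left_ne_zero_of_mul (hd' ▸ hd)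
  have hd'0 : d' ≠ 0 := right_ne_zero_of_mul (hd' ▸ hd)
  have hcop₂ : p * d' + q * e' = 1 := by
    apply mul_left_cancel₀ hc
    rw [mul_one]
    linear_combination hpq - p * hd' - q * he'
  -- generator expressions
  have hv₁c : v₁ = c * (d' * a₁) := by rw [ha₁, hd']; ring
  have hu₁c : u₁ = c * (e' * a₂) := by rw [he, he']; ring
  have hv₂c : v₂ = c * (d' * a₂) := by rw [ha₂, hd']; ring
  have hu₂c : u₂ = c * (e' * a₁) := by rw [hu₂, he']; ring
  -- ideal equality
  have hIeq : Ideal.span ({c} : Set R) = Ideal.span ({v₁, u₁, v₂, u₂} : Set R) := by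
    apply le_antisymm
    · rw [Ideal.span_le, Set.singleton_subset_iff]
      have h1 : v₁ ∈ Ideal.span ({v₁, u₁, v₂, u₂} : Set R) :=
        Ideal.subset_span (by simp)
      have h2 : u₁ ∈ Ideal.span ({v₁, u₁, v₂, u₂} : Set R) :=
        Ideal.subset_span (by simp)
      have h3 : v₂ ∈ Ideal.span ({v₁, u₁, v₂, u₂} : Set R) :=
        Ideal.subset_span (by simp)
      have h4 : u₂ ∈ Ideal.span ({v₁, u₁, v₂, u₂} : Set R) :=
        Ideal.subset_span (by simp)
      have hone : (r * a₁ + s * a₂) * (p * d' + q * e') = 1 := by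
        rw [hcop₁, hcop₂, one_mul]
      have : c = (r * p) * v₁ + (s * q) * u₁ + (s * p) * v₂ + (r * q) * u₂ := by
        rw [hv₁c, hu₁c, hv₂c, hu₂c]
        linear_combination (-c) * hone
      rw [SetLike.mem_coe, this]
      exact Submodule.add_mem _ (Submodule.add_mem _ (Submodule.add_mem _
        (Ideal.mul_mem_left _ _ h1) (Ideal.mul_mem_left _ _ h2))
        (Ideal.mul_mem_left _ _ h3)) (Ideal.mul_mem_left _ _ h4)
    · rw [Ideal.span_le]
      rintro x hx
      rw [SetLike.mem_coe, Ideal.mem_span_singleton]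
      simp only [Set.mem_insert_iff, Set.mem_singleton_iff] at hx
      rcases hx with rfl | rfl | rfl | rfl
      · exact ⟨d' * a₁, hv₁c⟩
      · exact ⟨e' * a₂, hu₁c⟩
      · exact ⟨d' * a₂, hv₂c⟩
      · exact ⟨e' * a₁, hu₂c⟩
  -- the linear functional ψ(g₁₀, g₀₁) = p*g₁₀ - q*g₀₁
  set ψ : (R × R) →ₗ[R] R := p • (LinearMap.fst R R R) - q • (LinearMap.snd R R R) with hψ
  have hψ_apply : ∀ z : R × R, ψ z = p * z.1 - q * z.2 := fun z => rfl
  -- structure of Z'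
  have hZstruct : ∀ z : R × R, z ∈ Z' → z = (d' * ψ z, -(e' * ψ z)) := by
    intro z hz
    obtain ⟨hz1, hz2⟩ := (hZ' z).mp hz
    have key : d' * z.2 + e' * z.1 = 0 := by
      apply mul_left_cancel₀ (mul_ne_zero hc ha₂0)
      rw [mul_zero]
      linear_combination hz1 - z.2 * hv₂c - z.1 * hu₁c
    obtain ⟨t, ht⟩ : d' ∣ z.1 := by
      have hco : IsCoprime d' e' := ⟨p, q, hcop₂⟩
      exact hco.dvd_of_dvd_mul_left ⟨-z.2, by linear_combination key⟩
    have hz2' : z.2 = -(e' * t) := by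
      apply mul_left_cancel₀ hd'0
      linear_combination key - e' * ht
    have hψz : ψ z = t := by
      rw [hψ_apply, ht, hz2']
      linear_combination t * hcop₂
    rw [hψz]
    exact Prod.ext (by rw [ht]) (by rw [hz2'])
  -- the map f : Z' → R ⧸ (c)
  set f : ↥Z' →ₗ[R] (R ⧸ Ideal.span ({c} : Set R)) :=
    (Ideal.span ({c} : Set R)).mkQ ∘ₗ ψ ∘ₗ Z'.subtype with hf
  have hmemZ : ((d', -e') : R × R) ∈ Z' := by
    rw [hZ']
    constructor
    · linear_combination -e' * hv₂c + d' * hu₁c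
    · linear_combination d' * hu₂c - e' * hv₁c
  have hsurj : Function.Surjective f := by
    intro z
    obtain ⟨x, rfl⟩ := Submodule.mkQ_surjective _ z
    refine ⟨x • ⟨(d', -e'), hmemZ⟩, ?_⟩
    have : ψ (x • ((d', -e') : R × R)) = x := by
      rw [map_smul, hψ_apply]
      simp only [smul_eq_mul]
      linear_combination x * hcop₂
    simp only [hf, LinearMap.comp_apply, Submodule.subtype_apply, Submodule.coe_smul]
    rw [this]
  have hker : LinearMap.ker f = B'.comap Z'.subtype := by
    ext z
    simp only [LinearMap.mem_ker, hf, LinearMap.comp_apply, Submodule.subtype_apply,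
      Submodule.mem_comap, Submodule.Quotient.mk_eq_zero, Submodule.mkQ_apply,
      Ideal.mem_span_singleton]
    constructor
    · rintro ⟨m, hm⟩
      rw [hB']
      refine ⟨-(r * m), s * m, ?_⟩
      have hz := hZstruct z.1 z.2
      rw [hz, hm]
      apply Prod.ext
      · show d' * (c * m) = v₂ * (s * m) - -(r * m) * v₁
        rw [hv₂c, hv₁c]
        linear_combination (-c) * d' * m * hcop₁
      · show -(e' * (c * m)) = u₂ * -(r * m) - s * m * u₁
        rw [hu₂c, hu₁c]
        linear_combination c * e' * m * hcop₁
    · intro hzB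
      obtain ⟨x, y, hxy⟩ := (hB' z.1).mp hzB
      refine ⟨a₂ * y - a₁ * x, ?_⟩
      rw [hψ_apply, hxy]
      show p * (v₂ * y - x * v₁) - q * (u₂ * x - y * u₁) = c * (a₂ * y - a₁ * x)
      rw [hv₂c, hv₁c, hu₂c, hu₁c]
      linear_combination (c * a₂ * y - c * a₁ * x) * hcop₂
  exact ⟨(Submodule.quotEquivOfEq _ _ hker.symm).symm.symm ≪≫ₗ
    f.quotKerEquivOfSurjective hsurj ≪≫ₗ Submodule.quotEquivOfEq _ _ hIeq⟩
end

section
/- Let R be a Bézout domain and W ∈ R with W ≠ 0. Let v₁, u₁, v₂, u₂, ṽ₂, ũ₂, w ∈ R satisfy u₁·v₁ = W, u₂·v₂ = W, ũ₂·ṽ₂ = W, w·(v₂·ṽ₂) = W, and IsCoprime v₂ ṽ₂. Then, as ideals of R: Ideal.span {v₁, u₁, v₂·ṽ₂, w} = Ideal.span {v₁, u₁, v₂, u₂} * Ideal.span {v₁, u₁, ṽ₂, ũ₂}, and moreover Ideal.span {v₁, u₁, v₂, u₂} + Ideal.span {v₁, u₁, ṽ₂, ũ₂} = ⊤. (This is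 the multiplicativity of the function α_W(v₁, v₂) = ⟨v₁, W/v₁, v₂, W/v₂⟩ in its second argument on coprime divisors; by symmetry of α_W, the same holds in the first argument.) -/
/-- Multiplicativity of `α_W(v₁, ·)` on coprime divisors: over a Bézout domain
`R`, if `u₁*v₁ = W`, `u₂*v₂ = W`, `tu₂*tv₂ = W`, `w*(v₂*tv₂) = W` with `v₂, tv₂` coprime, then
`⟨v₁, u₁, v₂*tv₂, w⟩ = ⟨v₁, u₁, v₂, u₂⟩ * ⟨v₁, u₁, tv₂, tu₂⟩` and the two factor ideals are
comaximal. -/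
theorem alpha_multiplicative
    {R : Type*} [CommRing R] [IsDomain R] [IsBezout R]
    (W v₁ u₁ v₂ u₂ tv₂ tu₂ w : R) (hW : W ≠ 0)
    (h₁ : u₁ * v₁ = W) (h₂ : u₂ * v₂ = W) (h₃ : tu₂ * tv₂ = W)
    (h₄ : w * (v₂ * tv₂) = W) (hc : IsCoprime v₂ tv₂) :
    Ideal.span ({v₁, u₁, v₂ * tv₂, w} : Set R) =
        Ideal.span ({v₁, u₁, v₂, u₂} : Set R) * Ideal.span ({v₁, u₁, tv₂, tu₂} : Set R) ∧
      Ideal.span ({v₁, u₁, v₂, u₂} : Set R) + Ideal.span ({v₁, u₁, tv₂, tu₂} : Set R) = ⊤ := by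
  obtain ⟨x, y, hxy⟩ := hc
  set I := Ideal.span ({v₁, u₁, v₂, u₂} : Set R) with hI
  set J := Ideal.span ({v₁, u₁, tv₂, tu₂} : Set R) with hJ
  set T := Ideal.span ({v₁, u₁, v₂ * tv₂, w} : Set R) with hT
  have hv₂0 : v₂ ≠ 0 := fun h => hW (by rw [← h₂, h, mul_zero])
  have htv₂0 : tv₂ ≠ 0 := fun h => hW (by rw [← h₃, h, mul_zero])
  have hu₂ : u₂ = w * tv₂ := by
    apply mul_right_cancel₀ hv₂0
    rw [h₂]; linear_combination -h₄
  have htu₂ : tu₂ = w * v₂ := by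
    apply mul_right_cancel₀ htv₂0
    rw [h₃]; linear_combination -h₄
  -- memberships
  have hv₁I : v₁ ∈ I := Ideal.subset_span (by simp)
  have hu₁I : u₁ ∈ I := Ideal.subset_span (by simp)
  have hv₂I : v₂ ∈ I := Ideal.subset_span (by simp)
  have hu₂I : u₂ ∈ I := Ideal.subset_span (by simp)
  have hv₁J : v₁ ∈ J := Ideal.subset_span (by simp)
  have hu₁J : u₁ ∈ J := Ideal.subset_span (by simp)
  have htv₂J : tv₂ ∈ J := Ideal.subset_span (by simp)
  have htu₂J : tu₂ ∈ J := Ideal.subset_span (by simp)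
  have hv₁T : v₁ ∈ T := Ideal.subset_span (by simp)
  have hu₁T : u₁ ∈ T := Ideal.subset_span (by simp)
  have hvvT : v₂ * tv₂ ∈ T := Ideal.subset_span (by simp)
  have hwT : w ∈ T := Ideal.subset_span (by simp)
  have key : ∀ a ∈ ({v₁, u₁, v₂, u₂} : Set R), ∀ b ∈ ({v₁, u₁, tv₂, tu₂} : Set R),
      a * b ∈ T := by
    intro a ha b hb
    simp only [Set.mem_insert_iff, Set.mem_singleton_iff] at ha hb
    rcases ha with h | h | h | h
    · rw [h]; exact Ideal.mul_mem_right _ _ hv₁T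
    · rw [h]; exact Ideal.mul_mem_right _ _ hu₁T
    · rw [h]
      rcases hb with h' | h' | h' | h' <;> rw [h']
      · exact Ideal.mul_mem_left _ _ hv₁T
      · exact Ideal.mul_mem_left _ _ hu₁T
      · exact hvvT
      · rw [htu₂, show v₂ * (w * v₂) = v₂ * v₂ * w by ring]
        exact Ideal.mul_mem_left _ _ hwT
    · rw [h]
      rcases hb with h' | h' | h' | h' <;> rw [h']
      · exact Ideal.mul_mem_left _ _ hv₁T
      · exact Ideal.mul_mem_left _ _ hu₁T
      · rw [hu₂, show w * tv₂ * tv₂ = tv₂ * tv₂ * w by ring]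
        exact Ideal.mul_mem_left _ _ hwT
      · rw [hu₂, htu₂, show w * tv₂ * (w * v₂) = w * tv₂ * v₂ * w by ring]
        exact Ideal.mul_mem_left _ _ hwT
  have step1 : ∀ a ∈ ({v₁, u₁, v₂, u₂} : Set R), ∀ s ∈ J, a * s ∈ T := by
    intro a ha s hs
    refine Submodule.span_induction (fun b hb => key a ha b hb) (by simp)
      (fun b c _ _ h1 h2 => by rw [mul_add]; exact add_mem h1 h2)
      (fun c b _ h => by
        rw [smul_eq_mul, ← mul_assoc, mul_comm a c, mul_assoc]
        exact Ideal.mul_mem_left _ _ h) hs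
  have step2 : ∀ r ∈ I, ∀ s ∈ J, r * s ∈ T := by
    intro r hr
    refine Submodule.span_induction (fun a ha => step1 a ha) (fun s _ => by simp)
      (fun a b _ _ h1 h2 s hs => by rw [add_mul]; exact add_mem (h1 s hs) (h2 s hs))
      (fun c a _ h s hs => by
        rw [smul_eq_mul, mul_assoc]
        exact Ideal.mul_mem_left _ _ (h s hs)) hr
  constructor
  · apply le_antisymm
    · rw [hT]
      apply Ideal.span_le.mpr
      simp only [Set.insert_subset_iff, Set.singleton_subset_iff, SetLike.mem_coe]
      refine ⟨?_, ?_, ?_, ?_⟩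
      · have hz : v₁ = x * (v₂ * v₁) + y * (v₁ * tv₂) := by linear_combination -v₁ * hxy
        rw [hz]
        exact add_mem (Ideal.mul_mem_left _ _ (Ideal.mul_mem_mul hv₂I hv₁J))
          (Ideal.mul_mem_left _ _ (Ideal.mul_mem_mul hv₁I htv₂J))
      · have hz : u₁ = x * (v₂ * u₁) + y * (u₁ * tv₂) := by linear_combination -u₁ * hxy
        rw [hz]
        exact add_mem (Ideal.mul_mem_left _ _ (Ideal.mul_mem_mul hv₂I hu₁J))
          (Ideal.mul_mem_left _ _ (Ideal.mul_mem_mul hu₁I htv₂J))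
      · exact Ideal.mul_mem_mul hv₂I htv₂J
      · have hz : w = x ^ 2 * (v₂ * (w * v₂)) + (2 * x * y) * (v₂ * (w * tv₂))
            + y ^ 2 * ((w * tv₂) * tv₂) := by
          linear_combination -(w * (x * v₂ + y * tv₂) + w) * hxy
        rw [hz]
        exact add_mem (add_mem
          (Ideal.mul_mem_left _ _ (Ideal.mul_mem_mul hv₂I (htu₂ ▸ htu₂J)))
          (Ideal.mul_mem_left _ _ (Ideal.mul_mem_mul hv₂I (Ideal.mul_mem_left _ _ htv₂J))))
          (Ideal.mul_mem_left _ _ (Ideal.mul_mem_mul (hu₂ ▸ hu₂I) htv₂J))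
    · exact Ideal.mul_le.mpr step2
  · rw [Ideal.eq_top_iff_one]
    have : (1 : R) = x * v₂ + y * tv₂ := hxy.symm
    rw [this]
    exact add_mem
      (Ideal.mem_sup_left (Ideal.mul_mem_left _ _ hv₂I))
      (Ideal.mem_sup_right (Ideal.mul_mem_left _ _ htv₂J))
end

section
/- Let R be a Bézout domain and W ∈ R with W ≠ 0. Let v₁, v₂, u₁, u₂, a, b, c, d, s, a', d' ∈ R satisfy u₁·v₁ = W, u₂·v₂ = W, v₁ = a·b, v₂ = a·c, IsCoprime b c (so a is a gcd of v₁, v₂), W = a·b·c·d, a = s·a', d = s·d', IsCoprime a' d' (so s is a gcd of a and d). Let s₁ be a gcd of u₁ and v₁, s₂ a gcd of u₂ and v₂, x₁ a gcd of s and a'·b, y₁ a gcd of s and c·d', x₂ a gcd of s and a'·c, and y₂ a gcd of s and b·d'. Then the following are equivalent: (i) a', b, c, d' are pairwise coprime and IsCoprime (b·c) s; (ii) Associated s₁ s₂, Associated x₁ x₂, and Associated y₁ y₂. (Condition (i) is equivalent to e_{v₁} ≅ e_{v₂} in the homotopy category hef(R,W); condition (ii) says the two factorizations have the same ordered invariant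 (s, x, y) up to association.) -/
section Aux

variable {R : Type*} [CommRing R] [IsDomain R] [IsBezout R] [GCDMonoid R]

/-- If `s` is coprime to `b`, then `gcd s (a*b)` is associated to `gcd s a`. -/
lemma gcd_absorb_aux {s a b : R} (h : IsCoprime s b) :
    Associated (gcd s (a * b)) (gcd s a) :=
  associated_of_dvd_dvd
    (dvd_gcd (gcd_dvd_left _ _)
      ((h.of_isCoprime_of_dvd_left (gcd_dvd_left _ _)).dvd_of_dvd_mul_right
        (gcd_dvd_right _ _)))
    (dvd_gcd (gcd_dvd_left _ _) ((gcd_dvd_right s a).trans (dvd_mul_right a b)))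

/-- A generator of `span {x, y}` is associated to `gcd x y`. -/
lemma assoc_of_span_aux {x y g : R}
    (h : Ideal.span ({x, y} : Set R) = Ideal.span ({g} : Set R)) :
    Associated (gcd x y) g :=
  Ideal.span_singleton_eq_span_singleton.mp (by rw [span_gcd, h])

end Aux

/-- Isomorphism criterion in `hef(R,W)` via the ordered invariant `(s, x, y)`.
With the standard parametrization `v₁ = a*b`, `v₂ = a*c` (`b, c` coprime), `W = a*b*c*d`,
`a = s*a'`, `d = s*d'` (`a', d'` coprime), and with `s₁, s₂, x₁, y₁, x₂, y₂` gcds (generators of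
the corresponding spans), the factorizations `e_{v₁}` and `e_{v₂}` are isomorphic in `hef(R,W)`
— i.e. `a', b, c, d'` are pairwise coprime and `(b*c, s) = (1)` — iff `s₁ ∼ s₂`, `x₁ ∼ x₂` and
`y₁ ∼ y₂`. -/
theorem hef_iso_iff_ordered_invariant
    {R : Type*} [CommRing R] [IsDomain R] [IsBezout R]
    (W v₁ v₂ u₁ u₂ a b c d s a' d' s₁ s₂ x₁ y₁ x₂ y₂ : R) (hW : W ≠ 0)
    (h₁ : u₁ * v₁ = W) (h₂ : u₂ * v₂ = W)
    (hv₁ : v₁ = a * b) (hv₂ : v₂ = a * c) (hbc : IsCoprime b c)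
    (hwabcd : W = a * b * c * d)
    (ha : a = s * a') (hd : d = s * d') (had : IsCoprime a' d')
    (hs₁ : Ideal.span ({u₁, v₁} : Set R) = Ideal.span ({s₁} : Set R))
    (hs₂ : Ideal.span ({u₂, v₂} : Set R) = Ideal.span ({s₂} : Set R))
    (hx₁ : Ideal.span ({s, a' * b} : Set R) = Ideal.span ({x₁} : Set R))
    (hy₁ : Ideal.span ({s, c * d'} : Set R) = Ideal.span ({y₁} : Set R))
    (hx₂ : Ideal.span ({s, a' * c} : Set R) = Ideal.span ({x₂} : Set R))
    (hy₂ : Ideal.span ({s, b * d'} : Set R) = Ideal.span ({y₂} : Set R)) :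
    ((IsCoprime a' b ∧ IsCoprime a' c ∧ IsCoprime a' d' ∧
        IsCoprime b c ∧ IsCoprime b d' ∧ IsCoprime c d') ∧ IsCoprime (b * c) s) ↔
      (Associated s₁ s₂ ∧ Associated x₁ x₂ ∧ Associated y₁ y₂) := by
  classical
  letI : GCDMonoid R := IsBezout.toGCDDomain R
  -- basic nonvanishing facts
  have habcd0 : a * b * c * d ≠ 0 := hwabcd ▸ hW
  have hab0 : a * b ≠ 0 := left_ne_zero_of_mul (left_ne_zero_of_mul habcd0)
  have ha0 : a ≠ 0 := left_ne_zero_of_mul hab0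
  have hac0 : a * c ≠ 0 :=
    mul_ne_zero ha0 (right_ne_zero_of_mul (left_ne_zero_of_mul habcd0))
  have hs0 : s ≠ 0 := left_ne_zero_of_mul (ha ▸ ha0)
  -- identify the cofactors
  have hu₁ : u₁ = c * d := by
    apply mul_right_cancel₀ hab0
    calc u₁ * (a * b) = u₁ * v₁ := by rw [hv₁]
      _ = a * b * c * d := by rw [h₁, hwabcd]
      _ = c * d * (a * b) := by ring
  have hu₂ : u₂ = b * d := by
    apply mul_right_cancel₀ hac0
    calc u₂ * (a * c) = u₂ * v₂ := by rw [hv₂]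
      _ = a * b * c * d := by rw [h₂, hwabcd]
      _ = b * d * (a * c) := by ring
  -- key factorizations of s₁ and s₂
  have key₁ : Associated (s * gcd (c * d') (a' * b)) s₁ := by
    refine (gcd_mul_left' s (c * d') (a' * b)).symm.trans ?_
    have hE : gcd (s * (c * d')) (s * (a' * b)) = gcd u₁ v₁ := by
      rw [hu₁, hv₁, ha, hd]; congr 1 <;> ring
    rw [hE]; exact assoc_of_span_aux hs₁
  have key₂ : Associated (s * gcd (b * d') (a' * c)) s₂ := by
    refine (gcd_mul_left' s (b * d') (a' * c)).symm.trans ?_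
    have hE : gcd (s * (b * d')) (s * (a' * c)) = gcd u₂ v₂ := by
      rw [hu₂, hv₂, ha, hd]; congr 1 <;> ring
    rw [hE]; exact assoc_of_span_aux hs₂
  constructor
  · rintro ⟨⟨ha'b, ha'c, -, -, hbd', hcd'⟩, hbcs⟩
    have hsb : IsCoprime s b := hbcs.of_mul_left_left.symm
    have hsc : IsCoprime s c := hbcs.of_mul_left_right.symm
    refine ⟨?_, ?_, ?_⟩
    · -- s₁ ∼ s₂
      have hG₁ : IsUnit (gcd (c * d') (a' * b)) :=
        (gcd_isUnit_iff _ _).mpr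
          ((ha'c.symm.mul_right hbc.symm).mul_left (had.symm.mul_right hbd'.symm))
      have hG₂ : IsUnit (gcd (b * d') (a' * c)) :=
        (gcd_isUnit_iff _ _).mpr
          ((ha'b.symm.mul_right hbc).mul_left (had.symm.mul_right hcd'.symm))
      have e₁ : Associated (s * gcd (c * d') (a' * b)) s := by
        simpa using Associated.mul_left s (associated_one_iff_isUnit.mpr hG₁)
      have e₂ : Associated (s * gcd (b * d') (a' * c)) s := by
        simpa using Associated.mul_left s (associated_one_iff_isUnit.mpr hG₂)
      exact key₁.symm.trans (e₁.trans (e₂.symm.trans key₂))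
    · -- x₁ ∼ x₂
      have e₁ : Associated (gcd s (a' * b)) (gcd s a') := gcd_absorb_aux hsb
      have e₂ : Associated (gcd s (a' * c)) (gcd s a') := gcd_absorb_aux hsc
      exact (assoc_of_span_aux hx₁).symm.trans
        (e₁.trans (e₂.symm.trans (assoc_of_span_aux hx₂)))
    · -- y₁ ∼ y₂
      have e₁ : Associated (gcd s (c * d')) (gcd s d') := by
        rw [mul_comm c d']; exact gcd_absorb_aux hsc
      have e₂ : Associated (gcd s (b * d')) (gcd s d') := by
        rw [mul_comm b d']; exact gcd_absorb_aux hsb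
      exact (assoc_of_span_aux hy₁).symm.trans
        (e₁.trans (e₂.symm.trans (assoc_of_span_aux hy₂)))
  · rintro ⟨hS, hX, hY⟩
    have hG : Associated (gcd (c * d') (a' * b)) (gcd (b * d') (a' * c)) :=
      Associated.of_mul_left (key₁.trans (hS.trans key₂.symm)) (Associated.refl s) hs0
    -- pairwise coprimality
    have ha'b : IsCoprime a' b := by
      have hdvd : gcd a' b ∣ c * d' :=
        ((dvd_gcd ((gcd_dvd_right a' b).mul_right d')
          ((gcd_dvd_left a' b).mul_right c)).trans hG.symm.dvd).trans (gcd_dvd_left _ _)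
      have hcop : IsCoprime (gcd a' b) (c * d') :=
        (hbc.of_isCoprime_of_dvd_left (gcd_dvd_right a' b)).mul_right
          (had.of_isCoprime_of_dvd_left (gcd_dvd_left a' b))
      exact (gcd_isUnit_iff a' b).mp (hcop.isUnit_of_dvd hdvd)
    have ha'c : IsCoprime a' c := by
      have hdvd : gcd a' c ∣ b * d' :=
        ((dvd_gcd ((gcd_dvd_right a' c).mul_right d')
          ((gcd_dvd_left a' c).mul_right b)).trans hG.dvd).trans (gcd_dvd_left _ _)
      have hcop : IsCoprime (gcd a' c) (b * d') :=
        (hbc.symm.of_isCoprime_of_dvd_left (gcd_dvd_right a' c)).mul_right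
          (had.of_isCoprime_of_dvd_left (gcd_dvd_left a' c))
      exact (gcd_isUnit_iff a' c).mp (hcop.isUnit_of_dvd hdvd)
    have hbd' : IsCoprime b d' := by
      have hdvd : gcd b d' ∣ a' * c :=
        ((dvd_gcd ((gcd_dvd_right b d').mul_left c)
          ((gcd_dvd_left b d').mul_left a')).trans hG.dvd).trans (gcd_dvd_right _ _)
      have hcop : IsCoprime (gcd b d') (a' * c) :=
        (had.symm.of_isCoprime_of_dvd_left (gcd_dvd_right b d')).mul_right
          (hbc.of_isCoprime_of_dvd_left (gcd_dvd_left b d'))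
      exact (gcd_isUnit_iff b d').mp (hcop.isUnit_of_dvd hdvd)
    have hcd' : IsCoprime c d' := by
      have hdvd : gcd c d' ∣ a' * b :=
        ((dvd_gcd ((gcd_dvd_right c d').mul_left b)
          ((gcd_dvd_left c d').mul_left a')).trans hG.symm.dvd).trans (gcd_dvd_right _ _)
      have hcop : IsCoprime (gcd c d') (a' * b) :=
        (had.symm.of_isCoprime_of_dvd_left (gcd_dvd_right c d')).mul_right
          (hbc.symm.of_isCoprime_of_dvd_left (gcd_dvd_left c d'))
      exact (gcd_isUnit_iff c d').mp (hcop.isUnit_of_dvd hdvd)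
    -- coprimality of b*c with s
    have hXg : Associated (gcd s (a' * b)) (gcd s (a' * c)) :=
      (assoc_of_span_aux hx₁).trans (hX.trans (assoc_of_span_aux hx₂).symm)
    have hsb : IsCoprime s b := by
      have hdvd : gcd s b ∣ a' * c :=
        ((dvd_gcd (gcd_dvd_left s b)
          ((gcd_dvd_right s b).mul_left a')).trans hXg.dvd).trans (gcd_dvd_right _ _)
      have hcop : IsCoprime (gcd s b) (a' * c) :=
        (ha'b.symm.of_isCoprime_of_dvd_left (gcd_dvd_right s b)).mul_right
          (hbc.of_isCoprime_of_dvd_left (gcd_dvd_right s b))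
      exact (gcd_isUnit_iff s b).mp (hcop.isUnit_of_dvd hdvd)
    have hsc : IsCoprime s c := by
      have hdvd : gcd s c ∣ a' * b :=
        ((dvd_gcd (gcd_dvd_left s c)
          ((gcd_dvd_right s c).mul_left a')).trans hXg.symm.dvd).trans (gcd_dvd_right _ _)
      have hcop : IsCoprime (gcd s c) (a' * b) :=
        (ha'c.symm.of_isCoprime_of_dvd_left (gcd_dvd_right s c)).mul_right
          (hbc.symm.of_isCoprime_of_dvd_left (gcd_dvd_right s c))
      exact (gcd_isUnit_iff s c).mp (hcop.isUnit_of_dvd hdvd)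
    exact ⟨⟨ha'b, ha'c, had, hbc, hbd', hcd'⟩, hsb.symm.mul_left hsc.symm⟩
end

section
/- Let R be a Bézout domain and W ∈ R with W ≠ 0. Let v₁, v₂, u₁, u₂, a, b, c, d, s, a', d' ∈ R satisfy u₁·v₁ = W, u₂·v₂ = W, v₁ = a·b, v₂ = a·c, IsCoprime b c (so a is a gcd of v₁, v₂), W = a·b·c·d, a = s·a', d = s·d', IsCoprime a' d' (so s is a gcd of a and d). Let s₁ be a gcd of u₁ and v₁, s₂ a gcd of u₂ and v₂, x₁ a gcd of s and a'·b, y₁ a gcd of s and c·d', x₂ a gcd of s and a'·c, and y₂ a gcd of s and b·d'. Then the following are equivalent: (i) a', b, c, d' are pairwise coprime and (IsCoprime (b·c) s or IsCoprime (a'·d') s); (ii) Associated s₁ s₂ and either (Associated x₁ x₂ and Associated y₁ y₂) or (Associated x₁ y₂ and Associated y₁ x₂). (Condition (i) is equivalent to e_{v₁} ≅ e_{v₂} in the Z₂-graded homotopy category HEF(R,W); condition (ii) says the two factorizations have the same invariant (s, {x, y}) with the pair {x, y} unordered, up to association.) -/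
section Helpers
variable {R : Type*} [CommRing R]

lemma isCoprime_iff_span_top (x y : R) :
    IsCoprime x y ↔ Ideal.span ({x, y} : Set R) = ⊤ := by
  rw [Ideal.eq_top_iff_one, Ideal.mem_span_pair]; rfl

/-- If `x, y` are coprime then `span {s*x, s*y} = span {s}`. -/
lemma span_pair_mul_coprime (s : R) {x y : R} (h : IsCoprime x y) :
    Ideal.span ({s * x, s * y} : Set R) = Ideal.span ({s} : Set R) := by
  apply le_antisymm
  · rw [Ideal.span_le]
    rintro z (rfl | rfl) <;>
      [exact Ideal.mem_span_singleton.2 ⟨x, rfl⟩;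
       exact Ideal.mem_span_singleton.2 ⟨y, rfl⟩]
  · rw [Ideal.span_le, Set.singleton_subset_iff]
    obtain ⟨u, v, huv⟩ := h
    rw [SetLike.mem_coe, Ideal.mem_span_pair]
    exact ⟨u, v, by linear_combination s * huv⟩

/-- If `s, b` are coprime then `span {s, t*b} = span {s, t}`. -/
lemma span_pair_coprime_mul {s b : R} (t : R) (h : IsCoprime s b) :
    Ideal.span ({s, t * b} : Set R) = Ideal.span ({s, t} : Set R) := by
  apply le_antisymm
  · rw [Ideal.span_le]
    rintro z (rfl | rfl)
    · exact Ideal.subset_span (Or.inl rfl)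
    · exact Ideal.mem_span_pair.2 ⟨0, b, by ring⟩
  · rw [Ideal.span_le]
    rintro z (rfl | rfl)
    · exact Ideal.subset_span (Or.inl rfl)
    · obtain ⟨u, v, huv⟩ := h
      exact Ideal.mem_span_pair.2 ⟨u * z, v, by linear_combination z * huv⟩

lemma not_both_mem {x y : R} (h : IsCoprime x y) {p : Ideal R} (hp : p ≠ ⊤)
    (hx : x ∈ p) (hy : y ∈ p) : False := by
  obtain ⟨u, v, huv⟩ := h
  exact hp ((Ideal.eq_top_iff_one p).2
    (huv ▸ add_mem (p.mul_mem_left u hx) (p.mul_mem_left v hy)))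

end Helpers


/-- Isomorphism criterion in the ℤ₂-graded category `HEF(R,W)` via the
unordered invariant `(s, {x, y})`. With the standard parametrization `v₁ = a*b`, `v₂ = a*c`
(`b, c` coprime), `W = a*b*c*d`, `a = s*a'`, `d = s*d'` (`a', d'` coprime), and with
`s₁, s₂, x₁, y₁, x₂, y₂` gcds (generators of the corresponding spans), the factorizations
`e_{v₁}` and `e_{v₂}` are isomorphic in `HEF(R,W)` — i.e. `a', b, c, d'` are pairwise coprime
and `(b*c, s) = (1)` or `(a'*d', s) = (1)` — iff `s₁ ∼ s₂` and the unordered pairs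
`{x₁, y₁}`, `{x₂, y₂}` agree up to association. -/
theorem HEF_iso_iff_unordered_invariant
    {R : Type*} [CommRing R] [IsDomain R] [IsBezout R]
    (W v₁ v₂ u₁ u₂ a b c d s a' d' s₁ s₂ x₁ y₁ x₂ y₂ : R) (hW : W ≠ 0)
    (h₁ : u₁ * v₁ = W) (h₂ : u₂ * v₂ = W)
    (hv₁ : v₁ = a * b) (hv₂ : v₂ = a * c) (hbc : IsCoprime b c)
    (hwabcd : W = a * b * c * d)
    (ha : a = s * a') (hd : d = s * d') (had : IsCoprime a' d')
    (hs₁ : Ideal.span ({u₁, v₁} : Set R) = Ideal.span ({s₁} : Set R))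
    (hs₂ : Ideal.span ({u₂, v₂} : Set R) = Ideal.span ({s₂} : Set R))
    (hx₁ : Ideal.span ({s, a' * b} : Set R) = Ideal.span ({x₁} : Set R))
    (hy₁ : Ideal.span ({s, c * d'} : Set R) = Ideal.span ({y₁} : Set R))
    (hx₂ : Ideal.span ({s, a' * c} : Set R) = Ideal.span ({x₂} : Set R))
    (hy₂ : Ideal.span ({s, b * d'} : Set R) = Ideal.span ({y₂} : Set R)) :
    ((IsCoprime a' b ∧ IsCoprime a' c ∧ IsCoprime a' d' ∧
        IsCoprime b c ∧ IsCoprime b d' ∧ IsCoprime c d') ∧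
      (IsCoprime (b * c) s ∨ IsCoprime (a' * d') s)) ↔
      (Associated s₁ s₂ ∧
        ((Associated x₁ x₂ ∧ Associated y₁ y₂) ∨ (Associated x₁ y₂ ∧ Associated y₁ x₂))) := by
  -- basic nonvanishing and element identities
  have hs0 : s ≠ 0 := by
    intro h; apply hW; rw [hwabcd, ha, h]; ring
  have hv₁0 : v₁ ≠ 0 := by
    intro h; apply hW; rw [← h₁, h]; ring
  have hv₂0 : v₂ ≠ 0 := by
    intro h; apply hW; rw [← h₂, h]; ring
  have eu₁ : u₁ = s * (c * d') := by
    have : u₁ * v₁ = (s * (c * d')) * v₁ := by rw [h₁, hwabcd, hv₁, hd]; ring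
    exact mul_right_cancel₀ hv₁0 this
  have ev₁ : v₁ = s * (a' * b) := by rw [hv₁, ha]; ring
  have eu₂ : u₂ = s * (b * d') := by
    have : u₂ * v₂ = (s * (b * d')) * v₂ := by rw [h₂, hwabcd, hv₂, hd]; ring
    exact mul_right_cancel₀ hv₂0 this
  have ev₂ : v₂ = s * (a' * c) := by rw [hv₂, ha]; ring
  rw [eu₁, ev₁] at hs₁
  rw [eu₂, ev₂] at hs₂
  constructor
  · rintro ⟨⟨hab, hac, -, -, hbd, hcd⟩, hcase⟩
    constructor
    · -- Associated s₁ s₂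
      have hcop1 : IsCoprime (c * d') (a' * b) :=
        (hac.symm.mul_right hbc.symm).mul_left (had.symm.mul_right hbd.symm)
      have hcop2 : IsCoprime (b * d') (a' * c) :=
        (hab.symm.mul_right hbc).mul_left (had.symm.mul_right hcd.symm)
      have e1 : Ideal.span ({s₁} : Set R) = Ideal.span ({s} : Set R) :=
        hs₁.symm.trans (span_pair_mul_coprime s hcop1)
      have e2 : Ideal.span ({s₂} : Set R) = Ideal.span ({s} : Set R) :=
        hs₂.symm.trans (span_pair_mul_coprime s hcop2)
      exact Ideal.span_singleton_eq_span_singleton.mp (e1.trans e2.symm)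
    · rcases hcase with hbcs | hads
      · -- gcd(bc,s)=1 case : x₁ ∼ x₂ and y₁ ∼ y₂
        left
        have hsb : IsCoprime s b := hbcs.of_mul_left_left.symm
        have hsc : IsCoprime s c := hbcs.of_mul_left_right.symm
        constructor
        · refine Ideal.span_singleton_eq_span_singleton.mp (hx₁.symm.trans (Eq.trans ?_ hx₂))
          rw [span_pair_coprime_mul a' hsb, span_pair_coprime_mul a' hsc]
        · refine Ideal.span_singleton_eq_span_singleton.mp (hy₁.symm.trans (Eq.trans ?_ hy₂))
          rw [mul_comm c d', mul_comm b d',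
            span_pair_coprime_mul d' hsc, span_pair_coprime_mul d' hsb]
      · -- gcd(a'd',s)=1 case : x₁ ∼ y₂ and y₁ ∼ x₂
        right
        have hsa : IsCoprime s a' := hads.of_mul_left_left.symm
        have hsd : IsCoprime s d' := hads.of_mul_left_right.symm
        constructor
        · refine Ideal.span_singleton_eq_span_singleton.mp (hx₁.symm.trans (Eq.trans ?_ hy₂))
          rw [mul_comm a' b, span_pair_coprime_mul b hsa, span_pair_coprime_mul b hsd]
        · refine Ideal.span_singleton_eq_span_singleton.mp (hy₁.symm.trans (Eq.trans ?_ hx₂))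
          rw [mul_comm a' c, span_pair_coprime_mul c hsd, span_pair_coprime_mul c hsa]
  · rintro ⟨hS, hpair⟩
    -- equality of the two gcd-of-row ideals
    have hspan : Ideal.span ({s * (c * d'), s * (a' * b)} : Set R)
        = Ideal.span ({s * (b * d'), s * (a' * c)} : Set R) :=
      hs₁.trans ((Ideal.span_singleton_eq_span_singleton.mpr hS).trans hs₂.symm)
    have cancel : ∀ {p q r : R}, s * p ∈ Ideal.span ({s * q, s * r} : Set R) →
        ∃ α β, p = α * q + β * r := by
      intro p q r hm
      obtain ⟨α, β, h⟩ := Ideal.mem_span_pair.1 hm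
      exact ⟨α, β, mul_left_cancel₀ hs0 (by linear_combination -h)⟩
    obtain ⟨α₁, β₁, mem1⟩ : ∃ α β, c * d' = α * (b * d') + β * (a' * c) :=
      cancel (hspan ▸ Ideal.subset_span (Set.mem_insert _ _))
    obtain ⟨α₂, β₂, mem2⟩ : ∃ α β, b * d' = α * (c * d') + β * (a' * b) :=
      cancel (hspan ▸ Ideal.subset_span (by simp))
    obtain ⟨α₃, β₃, mem3⟩ : ∃ α β, a' * c = α * (c * d') + β * (a' * b) :=
      cancel (hspan ▸ Ideal.subset_span (by simp))
    obtain ⟨α₄, β₄, mem4⟩ : ∃ α β, a' * b = α * (b * d') + β * (a' * c) :=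
      cancel (hspan ▸ Ideal.subset_span (by simp))
    -- pairwise coprimality
    have coprime_of : ∀ {x y : R}, ¬IsCoprime x y →
        ∃ p : Ideal R, p.IsMaximal ∧ x ∈ p ∧ y ∈ p := by
      intro x y h
      rw [isCoprime_iff_span_top] at h
      obtain ⟨p, pmax, hle⟩ := Ideal.exists_le_maximal _ h
      exact ⟨p, pmax, hle (Ideal.subset_span (by simp)), hle (Ideal.subset_span (by simp))⟩
    have hab : IsCoprime a' b := by
      by_contra h
      obtain ⟨p, pmax, hap, hbp⟩ := coprime_of h
      have : c * d' ∈ p := by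
        rw [mem1]
        exact add_mem (p.mul_mem_left α₁ (p.mul_mem_right d' hbp))
          (p.mul_mem_left β₁ (Ideal.mul_mem_right c p hap))
      rcases pmax.isPrime.mem_or_mem this with hc | hd'
      · exact not_both_mem hbc pmax.ne_top hbp hc
      · exact not_both_mem had pmax.ne_top hap hd'
    have hac : IsCoprime a' c := by
      by_contra h
      obtain ⟨p, pmax, hap, hcp⟩ := coprime_of h
      have : b * d' ∈ p := by
        rw [mem2]
        exact add_mem (p.mul_mem_left α₂ (p.mul_mem_right d' hcp))
          (p.mul_mem_left β₂ (Ideal.mul_mem_right b p hap))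
      rcases pmax.isPrime.mem_or_mem this with hb | hd'
      · exact not_both_mem hbc pmax.ne_top hb hcp
      · exact not_both_mem had pmax.ne_top hap hd'
    have hbd : IsCoprime b d' := by
      by_contra h
      obtain ⟨p, pmax, hbp, hdp⟩ := coprime_of h
      have : a' * c ∈ p := by
        rw [mem3]
        exact add_mem (p.mul_mem_left α₃ (p.mul_mem_left c hdp))
          (p.mul_mem_left β₃ (p.mul_mem_left a' hbp))
      rcases pmax.isPrime.mem_or_mem this with ha' | hc
      · exact not_both_mem had pmax.ne_top ha' hdp
      · exact not_both_mem hbc pmax.ne_top hbp hc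
    have hcd : IsCoprime c d' := by
      by_contra h
      obtain ⟨p, pmax, hcp, hdp⟩ := coprime_of h
      have : a' * b ∈ p := by
        rw [mem4]
        exact add_mem (p.mul_mem_left α₄ (p.mul_mem_left b hdp))
          (p.mul_mem_left β₄ (p.mul_mem_left a' hcp))
      rcases pmax.isPrime.mem_or_mem this with ha' | hb
      · exact not_both_mem had pmax.ne_top ha' hdp
      · exact not_both_mem hbc pmax.ne_top hb hcp
    refine ⟨⟨hab, hac, had, hbc, hbd, hcd⟩, ?_⟩
    rcases hpair with ⟨hxx, hyy⟩ | ⟨hxy, hyx⟩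
    · -- x₁ ∼ x₂, y₁ ∼ y₂ ⇒ IsCoprime (b*c) s
      left
      have hx : Ideal.span ({s, a' * b} : Set R) = Ideal.span ({s, a' * c} : Set R) :=
        hx₁.trans ((Ideal.span_singleton_eq_span_singleton.mpr hxx).trans hx₂.symm)
      obtain ⟨γ₁, δ₁, e1⟩ : ∃ γ δ, γ * s + δ * (a' * b) = a' * c :=
        Ideal.mem_span_pair.1 (show a' * c ∈ Ideal.span ({s, a' * b} : Set R) by
          rw [hx]; exact Ideal.subset_span (by simp))
      obtain ⟨γ₂, δ₂, e2⟩ : ∃ γ δ, γ * s + δ * (a' * c) = a' * b :=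
        Ideal.mem_span_pair.1 (show a' * b ∈ Ideal.span ({s, a' * c} : Set R) by
          rw [← hx]; exact Ideal.subset_span (by simp))
      by_contra h
      obtain ⟨p, pmax, hbcp, hsp⟩ := coprime_of h
      rcases pmax.isPrime.mem_or_mem hbcp with hbp | hcp
      · have : a' * c ∈ p := by
          rw [← e1]
          exact add_mem (p.mul_mem_left γ₁ hsp) (p.mul_mem_left δ₁ (p.mul_mem_left a' hbp))
        rcases pmax.isPrime.mem_or_mem this with ha' | hc
        · exact not_both_mem hab pmax.ne_top ha' hbp
        · exact not_both_mem hbc pmax.ne_top hbp hc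
      · have : a' * b ∈ p := by
          rw [← e2]
          exact add_mem (p.mul_mem_left γ₂ hsp) (p.mul_mem_left δ₂ (p.mul_mem_left a' hcp))
        rcases pmax.isPrime.mem_or_mem this with ha' | hb
        · exact not_both_mem hac pmax.ne_top ha' hcp
        · exact not_both_mem hbc pmax.ne_top hb hcp
    · -- x₁ ∼ y₂, y₁ ∼ x₂ ⇒ IsCoprime (a'*d') s
      right
      have hx : Ideal.span ({s, a' * b} : Set R) = Ideal.span ({s, b * d'} : Set R) :=
        hx₁.trans ((Ideal.span_singleton_eq_span_singleton.mpr hxy).trans hy₂.symm)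
      have hy : Ideal.span ({s, c * d'} : Set R) = Ideal.span ({s, a' * c} : Set R) :=
        hy₁.trans ((Ideal.span_singleton_eq_span_singleton.mpr hyx).trans hx₂.symm)
      obtain ⟨γ₁, δ₁, e1⟩ : ∃ γ δ, γ * s + δ * (a' * b) = b * d' :=
        Ideal.mem_span_pair.1 (show b * d' ∈ Ideal.span ({s, a' * b} : Set R) by
          rw [hx]; exact Ideal.subset_span (by simp))
      obtain ⟨γ₂, δ₂, e2⟩ : ∃ γ δ, γ * s + δ * (c * d') = a' * c :=
        Ideal.mem_span_pair.1 (show a' * c ∈ Ideal.span ({s, c * d'} : Set R) by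
          rw [hy]; exact Ideal.subset_span (by simp))
      by_contra h
      obtain ⟨p, pmax, hadp, hsp⟩ := coprime_of h
      rcases pmax.isPrime.mem_or_mem hadp with hap | hdp
      · have : b * d' ∈ p := by
          rw [← e1]
          exact add_mem (p.mul_mem_left γ₁ hsp) (p.mul_mem_left δ₁ (Ideal.mul_mem_right b p hap))
        rcases pmax.isPrime.mem_or_mem this with hb | hd'
        · exact not_both_mem hab pmax.ne_top hap hb
        · exact not_both_mem had pmax.ne_top hap hd'
      · have : a' * c ∈ p := by
          rw [← e2]
          exact add_mem (p.mul_mem_left γ₂ hsp) (p.mul_mem_left δ₂ (p.mul_mem_left c hdp))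
        rcases pmax.isPrime.mem_or_mem this with ha' | hc
        · exact not_both_mem had pmax.ne_top ha' hdp
        · exact not_both_mem hcd pmax.ne_top hc hdp
end

section
/- Let R be a Bézout domain, W ∈ R with W ≠ 0, and let S be a submonoid of R such that IsCoprime s W for every s ∈ S. If x, y are elements of the localization of R at S satisfying x·y = algebraMap R (Localization S) W, then there exist v₁, u₁ ∈ R with u₁·v₁ = W and a unit γ of the localization such that x = γ · algebraMap R (Localization S) v₁ (and consequently y = γ⁻¹ · algebraMap R (Localization S) u₁). In other words, every two-step factorization of the image of W in the localization arises, up to a unit, from a two-step factorization of W in R. -/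
/-!
Write `x = a / s` and `y = b / t` with `a * b = W * (s * t)`. Since a Bézout domain is a
decomposition monoid, `a ∣ W * (s * t)` splits `a` as `d * a'` with `d ∣ W` and `a' ∣ s * t`;
then `a'` becomes a unit in the localization, and `γ = a' / s` together with `W = d * w'` gives
the factorization, `y = γ⁻¹ * w'` following after cancelling `d ≠ 0`.
-/

theorem exists_common_factor_of_mul_eq_mul {α : Type*} [CommMonoidWithZero α]
    [IsCancelMulZero α] [DecompositionMonoid α] {a b w n : α} (hw : w ≠ 0) (h : a * b = w * n) :
    ∃ d a' w', a = d * a' ∧ w = d * w' ∧ a' ∣ n ∧ a' * b = w' * n := by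
  obtain ⟨d, a', ⟨w', rfl⟩, ha'n, rfl⟩ := exists_dvd_and_dvd_of_dvd_mul (Dvd.intro b h)
  have hd : d ≠ 0 := left_ne_zero_of_mul hw
  refine ⟨d, a', w', rfl, rfl, ha'n, mul_left_cancel₀ hd ?_⟩
  rw [← mul_assoc, h, mul_assoc]

namespace IsLocalization

variable {R : Type*} [CommRing R] {M : Submonoid R} {A : Type*} [CommRing A] [Algebra R A]
  [IsLocalization M A]

theorem exists_mk'_of_mul_eq_algebraMap {x y : A} {w : R} (h : x * y = algebraMap R A w) :
    ∃ (a b : R) (s t : M), x = mk' A a s ∧ y = mk' A b t ∧ a * b = w * (s * t) := by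
  obtain ⟨⟨a, s⟩, rfl⟩ := mk'_surjective M x
  obtain ⟨⟨b, t⟩, rfl⟩ := mk'_surjective M y
  rw [← mk'_mul, mk'_eq_iff_eq_mul, ← map_mul] at h
  obtain ⟨c, hc⟩ := exists_of_eq (M := M) h
  -- absorb the witness `c` into the second fraction
  refine ⟨a, c * b, s, c * t, rfl, (mk'_cancel b t c).symm.trans ?_, ?_⟩
  · rw [mul_comm b, mul_comm t]
  · simp only [Submonoid.coe_mul] at hc ⊢
    linear_combination hc

theorem isUnit_mk'_of_dvd {a : R} {n : M} (h : a ∣ n) (s : M) : IsUnit (mk' A a s) := by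
  have hfa : IsUnit (algebraMap R A a) := isUnit_of_dvd_unit (map_dvd _ h) (map_units A n)
  rw [← mk'_spec A a s] at hfa
  exact (IsUnit.mul_iff.mp hfa).1

end IsLocalization

open IsLocalization in
theorem localization_factorization_lifts_general
    {R : Type*} [CommRing R] [IsDomain R] [IsBezout R]
    (W : R) (hW : W ≠ 0) (S : Submonoid R)
    (x y : Localization S)
    (hxy : x * y = algebraMap R (Localization S) W) :
    ∃ (v₁ u₁ : R) (γ : (Localization S)ˣ),
      u₁ * v₁ = W ∧
      x = (γ : Localization S) * algebraMap R (Localization S) v₁ ∧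
      y = ((γ⁻¹ : (Localization S)ˣ) : Localization S) * algebraMap R (Localization S) u₁ := by
  obtain ⟨a, b, s, t, rfl, rfl, hab⟩ := exists_mk'_of_mul_eq_algebraMap (M := S) hxy
  obtain ⟨d, a', w', rfl, rfl, ha'st, ha'b⟩ := exists_common_factor_of_mul_eq_mul hW hab
  let γ := (isUnit_mk'_of_dvd (M := S) (A := Localization S) (n := s * t) ha'st s).unit
  refine ⟨d, w', γ, mul_comm _ _, ?_, ?_⟩
  · rw [IsUnit.unit_spec, mul_comm (mk' _ _ _), mul_mk'_eq_mk'_of_mul]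
  · rw [Units.eq_inv_mul_iff_mul_eq, IsUnit.unit_spec, ← mk'_mul, ha'b, ← Submonoid.coe_mul,
      mk'_mul_cancel_right]

/-- Let `R` be a Bézout domain, `W ≠ 0`, and `S` a submonoid of `R` all of
whose elements are coprime to `W`. Then every two-step factorization `x * y = W` of the image of
`W` in the localization `R_S` arises, up to a unit of `R_S`, from a two-step factorization
`u₁ * v₁ = W` in `R`. -/
theorem localization_factorization_lifts
    {R : Type*} [CommRing R] [IsDomain R] [IsBezout R]
    (W : R) (hW : W ≠ 0) (S : Submonoid R) (hS : ∀ s ∈ S, IsCoprime s W)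
    (x y : Localization S)
    (hxy : x * y = algebraMap R (Localization S) W) :
    ∃ (v₁ u₁ : R) (γ : (Localization S)ˣ),
      u₁ * v₁ = W ∧
      x = (γ : Localization S) * algebraMap R (Localization S) v₁ ∧
      y = ((γ⁻¹ : (Localization S)ˣ) : Localization S) * algebraMap R (Localization S) u₁ :=
  localization_factorization_lifts_general W hW S x y hxy
end

section
/- Let R be a GCD domain and W ∈ R with W ≠ 0. Let v₁, v₂, u₁, u₂ ∈ R satisfy u₁·v₁ = W and u₂·v₂ = W. Let a be a gcd of v₁ and v₂ and write v₂ = a·c. Let s be a gcd of the four elements v₁, v₂, u₁, u₂, let t be a gcd of u₁ and v₂, and let w be a gcd of t and c. Then t and s·w are associated: Associated (gcd(u₁, v₂)) (s · gcd(gcd(u₁, v₂), v₂/gcd(v₁, v₂))). By symmetry, writing v₁ = a·b and letting t' be a gcd of u₂ and v₁ and w' a gcd of t' and b, also Associated t' (s·w'). -/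
/-!
Write `v₁ = a b`, `v₂ = a c` with `b, c` coprime. From `u₁ a b = u₂ a c` we get `u₁ b = u₂ c`,
so `c ∣ u₁`, and then `u₁ = c x`, `u₂ = b x` for a common cofactor `x`. Hence
`t ∼ gcd (c x) (a c) ∼ c · gcd x a`, while `c ∣ t` gives `w ∼ c`, and coprimality of `b, c`
gives `s ∼ gcd (a b, a c, c x, b x) ∼ gcd a x`. The second identity is the first with the
indices swapped.
-/

/-- `d` is a greatest common divisor of `x` and `y`. -/
def IsGcdOf {R : Type*} [CommMonoidWithZero R] (d x y : R) : Prop :=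
  d ∣ x ∧ d ∣ y ∧ ∀ e : R, e ∣ x → e ∣ y → e ∣ d

namespace IsGcdOf

variable {R : Type*} [CommMonoidWithZero R]

theorem symm {d x y : R} (h : IsGcdOf d x y) : IsGcdOf d y x :=
  ⟨h.2.1, h.1, fun e hx hy => h.2.2 e hy hx⟩

theorem associated_of_dvd {d x y : R} [IsLeftCancelMulZero R] (h : IsGcdOf d x y) (hyx : y ∣ x) :
    Associated d y :=
  associated_of_dvd_dvd h.2.1 (h.2.2 y hyx dvd_rfl)

theorem associated_gcd [GCDMonoid R] {d x y : R} (h : IsGcdOf d x y) :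
    Associated d (gcd x y) :=
  associated_of_dvd_dvd (dvd_gcd h.1 h.2.1) (h.2.2 _ (gcd_dvd_left x y) (gcd_dvd_right x y))

theorem isRelPrime_of_mul [IsLeftCancelMulZero R] {a b c : R} (ha : a ≠ 0)
    (h : IsGcdOf a (a * b) (a * c)) : IsRelPrime b c := fun e hb hc =>
  isUnit_of_dvd_one <| (mul_dvd_mul_iff_left ha).mp <| by
    simpa using h.2.2 (a * e) (mul_dvd_mul_left a hb) (mul_dvd_mul_left a hc)

end IsGcdOf

section GCDMonoid

variable {R : Type*} [CommMonoidWithZero R] [GCDMonoid R]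

theorem IsRelPrime.dvd_of_dvd_mul_of_dvd_mul {b c s x : R} (hbc : IsRelPrime b c)
    (hb : s ∣ x * b) (hc : s ∣ x * c) : s ∣ x :=
  calc s ∣ gcd (x * b) (x * c) := dvd_gcd hb hc
    _ ∣ x * gcd b c := (gcd_mul_left' x b c).dvd
    _ ∣ x := (associated_mul_unit_left x _ (gcd_isUnit_iff_isRelPrime.mpr hbc)).dvd

theorem IsRelPrime.exists_eq_mul_of_mul_eq_mul {b c u₁ u₂ : R} (hbc : IsRelPrime b c)
    (hc : c ≠ 0) (h : u₁ * b = u₂ * c) : ∃ x, u₁ = c * x ∧ u₂ = b * x := by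
  obtain ⟨x, rfl⟩ : c ∣ u₁ := hbc.symm.dvd_of_dvd_mul_right ⟨u₂, by rw [h, mul_comm]⟩
  refine ⟨x, rfl, mul_left_cancel₀ hc ?_⟩
  rw [mul_comm c u₂, ← h, mul_assoc, mul_comm x]

theorem associated_mul_of_mul_eq_mul {v₁ v₂ u₁ u₂ a b c s t w : R}
    (hv₂ : v₂ ≠ 0) (heq : u₁ * v₁ = u₂ * v₂)
    (ha : IsGcdOf a v₁ v₂) (hb : v₁ = a * b) (hc : v₂ = a * c)
    (hs : s ∣ v₁ ∧ s ∣ v₂ ∧ s ∣ u₁ ∧ s ∣ u₂ ∧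
      ∀ e : R, e ∣ v₁ → e ∣ v₂ → e ∣ u₁ → e ∣ u₂ → e ∣ s)
    (ht : IsGcdOf t u₁ v₂) (hw : IsGcdOf w t c) :
    Associated t (s * w) := by
  obtain ⟨hsv₁, hsv₂, hsu₁, hsu₂, hs_gcd⟩ := hs
  subst hb hc
  have ha0 : a ≠ 0 := left_ne_zero_of_mul hv₂
  have hbc : IsRelPrime b c := ha.isRelPrime_of_mul ha0
  obtain ⟨x, rfl, rfl⟩ := hbc.exists_eq_mul_of_mul_eq_mul (right_ne_zero_of_mul hv₂)
    (mul_left_cancel₀ ha0 (by rw [mul_left_comm, heq, mul_left_comm]))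
  have ht_assoc : Associated t (c * gcd x a) :=
    ht.associated_gcd.trans (by rw [mul_comm a c]; exact gcd_mul_left' c x a)
  have hw_assoc : Associated w c :=
    hw.associated_of_dvd (ht.2.2 c (dvd_mul_right c x) (dvd_mul_left c a))
  have hs_assoc : Associated s (gcd x a) := by
    refine associated_of_dvd_dvd (dvd_gcd ?_ (ha.2.2 s hsv₁ hsv₂)) ?_
    · exact hbc.dvd_of_dvd_mul_of_dvd_mul (by rwa [mul_comm]) (by rwa [mul_comm])
    · exact hs_gcd _ ((gcd_dvd_right x a).mul_right b) ((gcd_dvd_right x a).mul_right c)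
        ((gcd_dvd_left x a).mul_left c) ((gcd_dvd_left x a).mul_left b)
  rw [mul_comm] at ht_assoc
  exact ht_assoc.trans (hs_assoc.mul_mul hw_assoc).symm

end GCDMonoid

theorem gcd_s_identity_general
    {R : Type*} [CommRing R] [GCDMonoid R]
    (W v₁ v₂ u₁ u₂ a b c s t w t' w' : R) (hW : W ≠ 0)
    (h₁ : u₁ * v₁ = W) (h₂ : u₂ * v₂ = W)
    (ha : IsGcdOf a v₁ v₂) (hb : v₁ = a * b) (hc : v₂ = a * c)
    (hs : s ∣ v₁ ∧ s ∣ v₂ ∧ s ∣ u₁ ∧ s ∣ u₂ ∧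
      ∀ e : R, e ∣ v₁ → e ∣ v₂ → e ∣ u₁ → e ∣ u₂ → e ∣ s)
    (ht : IsGcdOf t u₁ v₂) (hw : IsGcdOf w t c)
    (ht' : IsGcdOf t' u₂ v₁) (hw' : IsGcdOf w' t' b) :
    Associated t (s * w) ∧ Associated t' (s * w') := by
  have hv₁ : v₁ ≠ 0 := right_ne_zero_of_mul (h₁ ▸ hW)
  have hv₂ : v₂ ≠ 0 := right_ne_zero_of_mul (h₂ ▸ hW)
  refine ⟨associated_mul_of_mul_eq_mul hv₂ (h₁.trans h₂.symm) ha hb hc hs ht hw, ?_⟩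
  obtain ⟨hsv₁, hsv₂, hsu₁, hsu₂, hs_gcd⟩ := hs
  exact associated_mul_of_mul_eq_mul hv₁ (h₂.trans h₁.symm) ha.symm hc hb
    ⟨hsv₂, hsv₁, hsu₂, hsu₁, fun e e₁ e₂ e₃ e₄ => hs_gcd e e₂ e₁ e₄ e₃⟩ ht' hw'

/-- Let `R` be a GCD domain, `W ≠ 0`, `u₁*v₁ = W`, `u₂*v₂ = W`. Let `a` be a
gcd of `v₁, v₂`, write `v₁ = a*b`, `v₂ = a*c`, let `s` be a gcd of `v₁, v₂, u₁, u₂`, `t` a gcd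
of `u₁, v₂`, `w` a gcd of `t, c`, `t'` a gcd of `u₂, v₁`, `w'` a gcd of `t', b`. Then
`(u₁,v₂) ∼ s·((u₁,v₂), v₂/(v₁,v₂))` and symmetrically `(u₂,v₁) ∼ s·((u₂,v₁), v₁/(v₁,v₂))`,
i.e. `t ∼ s*w` and `t' ∼ s*w'`. -/
theorem gcd_s_identity
    {R : Type*} [CommRing R] [IsDomain R] [GCDMonoid R]
    (W v₁ v₂ u₁ u₂ a b c s t w t' w' : R) (hW : W ≠ 0)
    (h₁ : u₁ * v₁ = W) (h₂ : u₂ * v₂ = W)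
    (ha : IsGcdOf a v₁ v₂) (hb : v₁ = a * b) (hc : v₂ = a * c)
    (hs : s ∣ v₁ ∧ s ∣ v₂ ∧ s ∣ u₁ ∧ s ∣ u₂ ∧
      ∀ e : R, e ∣ v₁ → e ∣ v₂ → e ∣ u₁ → e ∣ u₂ → e ∣ s)
    (ht : IsGcdOf t u₁ v₂) (hw : IsGcdOf w t c)
    (ht' : IsGcdOf t' u₂ v₁) (hw' : IsGcdOf w' t' b) :
    Associated t (s * w) ∧ Associated t' (s * w') :=
  gcd_s_identity_general W v₁ v₂ u₁ u₂ a b c s t w t' w' hW h₁ h₂ ha hb hc hs ht hw ht' hw'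
end

section
/- Fix r ≥ 1 and n : Fin r → ℕ with n i ≥ 2 for all i. For an exponent vector k : Fin r → ℕ with k i ≤ n i for all i, define m(k) i = min (k i) (n i − k i), X(k) = {i | n i < 2·(k i) ∧ k i < n i}, and Y(k) = {i | 0 < k i ∧ 2·(k i) < n i}. Let I⁰ = {i | n i is even} and I¹ = {i | n i is odd}. Then the number of distinct values of the unordered invariant k ↦ (m(k), {X(k), Y(k)}) (where {X(k), Y(k)} is an unordered pair of subsets of Fin r), as k ranges over all exponent vectors, equals 2^{|I⁰|} + Σ_{∅ ≠ K ⊆ Fin r} 2^{|I⁰| + |K ∩ I¹| − 1} · ∏_{i ∈ K} ⌊(n i − 1)/2⌋. (By completeness of the divisorial invariant, this is the number N(R,W) of isomorphism classes of elementary matrix factorizations in HEF(R,W) for a critically-finite W = p₁^{n₁}···p_r^{n_r} over a Bézout domain R with pairwise non-associated primes p_i.) -/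
/-!
The ordered invariant `k ↦ (m(k), X(k), Y(k))` is computed coordinatewise, and its `i`-th
coordinate takes exactly `n i` values (`k i = 0` and `k i = n i` give the same one), so it takes
`∏ n i` values. Exchanging `X` and `Y` is an involution of this set of values (it is induced by
`k ↦ n - k`) whose orbits are the values of the unordered invariant, and whose fixed points are
the values with `X = Y = ∅`, i.e. `k i ∈ {0, n i / 2, n i}`: there are `2 ^ |I⁰|` of them. So
twice the count is `∏ n i + 2 ^ |I⁰|`, and expanding `∏ (2 ⌊(n i - 1)/2⌋ + (2 or 1))` over the
subsets `K` of coordinates shows the same for twice the right-hand side.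
-/

open Finset

theorem two_mul_card_image_eq_card_add_card_filter {α β : Type*} [DecidableEq α] [DecidableEq β]
    {S : Finset α} {q : α → β} {σ : α → α} (hσS : ∀ a ∈ S, σ a ∈ S)
    (hq : ∀ a b, q a = q b ↔ b = a ∨ b = σ a) :
    2 * #(S.image q) = #S + #(S.filter fun a => σ a = a) := by
  rw [card_eq_sum_card_image q S,
    card_eq_sum_card_fiberwise (f := q) (t := S.image q)
      fun a ha => mem_image_of_mem q (mem_filter.1 ha).1,
    ← sum_add_distrib, mul_comm, ← smul_eq_mul, ← sum_const]
  refine sum_congr rfl fun b hb => ?_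
  obtain ⟨a, ha, rfl⟩ := mem_image.1 hb
  have hσa : q (σ a) = q a := ((hq a (σ a)).2 (Or.inr rfl)).symm
  have fiber : S.filter (fun x => q x = q a) = {a, σ a} := by
    ext x
    simp only [mem_filter, mem_insert, mem_singleton]
    refine ⟨fun hx => (hq a x).1 hx.2.symm, ?_⟩
    rintro (h | h) <;> rw [h]
    exacts [⟨ha, rfl⟩, ⟨hσS a ha, hσa⟩]
  -- `σ (σ a) = σ a` forces `σ a = a`, as `a` lies in the fibre `{σ a, σ (σ a)}` of `σ a`
  have fixed_fiber : (S.filter fun x => σ x = x).filter (fun x => q x = q a) =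
      if σ a = a then {a} else ∅ := by
    ext x
    simp only [mem_filter]
    constructor
    · rintro ⟨⟨-, hx⟩, hqx⟩
      rcases (hq a x).1 hqx.symm with rfl | rfl
      · simp [hx]
      · rcases (hq (σ a) a).1 hσa with h | h
        · simp [← h]
        · simp [(h.trans hx).symm]
    · split_ifs with h <;> simp_all
  rw [fiber, fixed_fiber]
  split_ifs with h
  · simp [h]
  · rw [card_pair (Ne.symm h), card_empty]

namespace HEF

/-- The `i`-th coordinates of `m(k)`, `X(k)` and `Y(k)` for `N = n i`, `k = k i`. -/
def coordInv (N : ℕ) (k : Fin (N + 1)) : ℕ × Bool × Bool :=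
  (min (k : ℕ) (N - k), decide (N < 2 * (k : ℕ) ∧ (k : ℕ) < N),
    decide (0 < (k : ℕ) ∧ 2 * (k : ℕ) < N))

def swapXY (t : ℕ × Bool × Bool) : ℕ × Bool × Bool := (t.1, t.2.swap)

variable {N : ℕ}

theorem coordInv_rev (k : Fin (N + 1)) : coordInv N k.rev = swapXY (coordInv N k) := by
  have := k.is_le
  simp only [coordInv, swapXY, Fin.val_rev, Prod.swap_prod_mk, Prod.mk.injEq, decide_eq_decide]
  omega

theorem image_coordInv_eq_image_castSucc (hN : 1 ≤ N) :
    univ.image (coordInv N) = univ.image (coordInv N ∘ Fin.castSucc) := by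
  ext t
  simp only [mem_image, mem_univ, true_and, Function.comp_apply]
  refine ⟨fun ⟨k, hk⟩ => ?_, fun ⟨j, hj⟩ => ⟨_, hj⟩⟩
  subst hk
  induction k using Fin.lastCases with
  | last =>
    refine ⟨⟨0, hN⟩, ?_⟩
    simp only [coordInv, Fin.val_last, Fin.val_castSucc, Prod.mk.injEq, decide_eq_decide]
    omega
  | cast j => exact ⟨j, rfl⟩

theorem card_image_coordInv (hN : 1 ≤ N) : #(univ.image (coordInv N)) = N := by
  rw [image_coordInv_eq_image_castSucc hN, card_image_of_injective, card_univ, Fintype.card_fin]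
  intro a b h
  have := a.is_lt
  have := b.is_lt
  simp only [Function.comp_apply, coordInv, Fin.val_castSucc, Prod.mk.injEq,
    decide_eq_decide] at h
  ext
  omega

theorem mem_filter_image_coordInv_iff {t : ℕ × Bool × Bool} :
    t ∈ (univ.image (coordInv N)).filter (fun t => swapXY t = t) ↔
      t.2 = (false, false) ∧ (t.1 = 0 ∨ 2 * t.1 = N) := by
  simp only [mem_filter, mem_image, mem_univ, true_and]
  constructor
  · rintro ⟨⟨k, rfl⟩, h⟩
    have := k.is_le
    simp only [coordInv, swapXY, Prod.swap_prod_mk, Prod.mk.injEq, decide_eq_decide] at h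
    simp only [coordInv, Prod.mk.injEq, decide_eq_false_iff_not]
    omega
  · obtain ⟨m, x, y⟩ := t
    rintro ⟨h, hm⟩
    simp only [Prod.mk.injEq] at h
    obtain ⟨rfl, rfl⟩ := h
    refine ⟨⟨⟨m, by omega⟩, ?_⟩, rfl⟩
    simp only [coordInv, Prod.mk.injEq, decide_eq_false_iff_not]
    omega

theorem card_filter_image_coordInv (hN : 2 ≤ N) :
    #((univ.image (coordInv N)).filter (fun t => swapXY t = t)) = if Even N then 2 else 1 := by
  have hfix : (univ.image (coordInv N)).filter (fun t => swapXY t = t) =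
      if Even N then {(0, false, false), (N / 2, false, false)} else {(0, false, false)} := by
    ext ⟨m, x, y⟩
    rw [mem_filter_image_coordInv_iff]
    split_ifs with hE <;> rw [Nat.even_iff] at * <;> cases x <;> cases y <;>
      simp <;> omega
  rw [hfix]
  split_ifs
  · exact card_pair (by simp only [ne_eq, Prod.mk.injEq]; omega)
  · rfl

variable {r : ℕ}

def unorderedInv (v : Fin r → ℕ × Bool × Bool) : (Fin r → ℕ) × Sym2 (Finset (Fin r)) :=
  (fun i => (v i).1, s(univ.filter fun i => (v i).2.1, univ.filter fun i => (v i).2.2))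

theorem unorderedInv_eq_iff {v w : Fin r → ℕ × Bool × Bool} :
    unorderedInv v = unorderedInv w ↔ w = v ∨ w = swapXY ∘ v := by
  simp only [unorderedInv, swapXY, Sym2.eq_iff, funext_iff, Finset.ext_iff,
    mem_filter, mem_univ, true_and, Prod.ext_iff, Function.comp_apply, Prod.fst_swap,
    Prod.snd_swap, Bool.coe_iff_coe]
  constructor
  · rintro ⟨h1, h | h⟩
    · exact Or.inl fun i => ⟨(h1 i).symm, (h.1 i).symm, (h.2 i).symm⟩
    · exact Or.inr fun i => ⟨(h1 i).symm, (h.2 i).symm, (h.1 i).symm⟩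
  · rintro (h | h)
    · exact ⟨fun i => (h i).1.symm, Or.inl ⟨fun i => (h i).2.1.symm, fun i => (h i).2.2.symm⟩⟩
    · exact ⟨fun i => (h i).1.symm, Or.inr ⟨fun i => (h i).2.2.symm, fun i => (h i).2.1.symm⟩⟩

variable (n : Fin r → ℕ)

theorem image_coordInv_pi :
    univ.image (fun (k : ∀ i, Fin (n i + 1)) i => coordInv (n i) (k i)) =
      Fintype.piFinset fun i => univ.image (coordInv (n i)) := by
  rw [Fintype.piFinset_image, Fintype.piFinset_univ]

theorem two_mul_card_image_unorderedInv (hn : ∀ i, 2 ≤ n i) :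
    2 * #((univ.image fun (k : ∀ i, Fin (n i + 1)) i => coordInv (n i) (k i)).image unorderedInv) =
      ∏ i, n i + 2 ^ #(univ.filter fun i => Even (n i)) := by
  have hσ : ∀ v ∈ Fintype.piFinset (fun i => univ.image (coordInv (n i))),
      swapXY ∘ v ∈ Fintype.piFinset (fun i => univ.image (coordInv (n i))) := by
    simp only [Fintype.mem_piFinset, mem_image, mem_univ, true_and, Function.comp_apply]
    intro v hv i
    obtain ⟨k, hk⟩ := hv i
    exact ⟨k.rev, by rw [coordInv_rev, hk]⟩
  have hfix : (Fintype.piFinset fun i => univ.image (coordInv (n i))).filter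
      (fun v => swapXY ∘ v = v) =
      Fintype.piFinset fun i => (univ.image (coordInv (n i))).filter fun t => swapXY t = t := by
    ext v
    simp only [mem_filter, Fintype.mem_piFinset, funext_iff, Function.comp_apply, forall_and]
  rw [image_coordInv_pi,
    two_mul_card_image_eq_card_add_card_filter hσ fun _ _ => unorderedInv_eq_iff, hfix,
    Fintype.card_piFinset, Fintype.card_piFinset,
    prod_congr rfl fun i _ => card_image_coordInv (one_le_two.trans (hn i)),
    prod_congr rfl fun i _ => card_filter_image_coordInv (hn i),
    prod_ite, prod_const, prod_const, one_pow, mul_one]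

theorem card_add_card_filter_even_sdiff (K : Finset (Fin r)) :
    #K + #((univ \ K).filter fun i => Even (n i)) =
      #(univ.filter fun i => Even (n i)) + #(K ∩ univ.filter fun i => Odd (n i)) := by
  have hK := card_inter_add_card_sdiff K (univ.filter fun i => Even (n i))
  have hE := card_sdiff_add_card_inter (univ.filter fun i => Even (n i)) K
  have hK_odd : K \ univ.filter (fun i => Even (n i)) = K ∩ univ.filter fun i => Odd (n i) := by
    ext i
    simp [← Nat.not_even_iff_odd]
  have hcompl : (univ \ K).filter (fun i => Even (n i)) =
      univ.filter (fun i => Even (n i)) \ K := by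
    ext i
    simp [and_comm]
  rw [inter_comm, hK_odd] at hK
  rw [hcompl]
  omega

theorem prod_eq_sum_powerset (hn : ∀ i, 1 ≤ n i) :
    ∏ i, n i = ∑ K ∈ univ.powerset,
      2 ^ (#(univ.filter fun i => Even (n i)) + #(K ∩ univ.filter fun i => Odd (n i))) *
        ∏ i ∈ K, (n i - 1) / 2 := by
  have hsplit : ∀ i, n i = 2 * ((n i - 1) / 2) + if Even (n i) then 2 else 1 := by
    intro i
    have := hn i
    split_ifs with h <;> rw [← Nat.not_odd_iff_even, Nat.odd_iff] at * <;> omega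
  rw [prod_congr rfl fun i _ => hsplit i, prod_add]
  refine sum_congr rfl fun K _ => ?_
  rw [prod_mul_distrib, prod_const, prod_ite, prod_const, prod_const, one_pow, mul_one,
    ← card_add_card_filter_even_sdiff, pow_add]
  ring

theorem two_mul_count_formula (hn : ∀ i, 1 ≤ n i) :
    2 * (2 ^ #(univ.filter fun i => Even (n i)) +
      ∑ K ∈ univ.powerset.filter (fun K : Finset (Fin r) => K.Nonempty),
        2 ^ (#(univ.filter fun i => Even (n i)) + #(K ∩ univ.filter fun i => Odd (n i)) - 1) *
          ∏ i ∈ K, (n i - 1) / 2) =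
      ∏ i, n i + 2 ^ #(univ.filter fun i => Even (n i)) := by
  have hpos : ∀ K ∈ univ.powerset.filter (fun K : Finset (Fin r) => K.Nonempty),
      0 < #(univ.filter fun i => Even (n i)) + #(K ∩ univ.filter fun i => Odd (n i)) := by
    intro K hK
    obtain ⟨i, hi⟩ := (mem_filter.1 hK).2
    rcases Nat.even_or_odd (n i) with h | h
    · exact Nat.add_pos_left (card_pos.2 ⟨i, by simpa using h⟩) _
    · exact Nat.add_pos_right _ (card_pos.2 ⟨i, by simpa [hi] using h⟩)
  have hnonempty : univ.powerset.filter (fun K : Finset (Fin r) => K.Nonempty) =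
      univ.powerset.erase ∅ := by
    rw [← filter_ne']
    exact filter_congr fun K _ => nonempty_iff_ne_empty
  rw [prod_eq_sum_powerset n hn, ← add_sum_erase _ _ (empty_mem_powerset univ), ← hnonempty,
    mul_add, mul_sum, sum_congr rfl fun K hK => by
      rw [← mul_assoc, mul_comm 2, Nat.two_pow_pred_mul_two (hpos K hK)]]
  simp only [empty_inter, card_empty, add_zero, prod_empty, mul_one]
  ring

theorem image_invariant_eq_image_unorderedInv :
    (univ.image fun k : (∀ i : Fin r, Fin (n i + 1)) =>
        ((fun i : Fin r => min ((k i : ℕ)) (n i - (k i : ℕ))),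
          s((univ.filter fun i : Fin r => n i < 2 * (k i : ℕ) ∧ (k i : ℕ) < n i),
            (univ.filter fun i : Fin r => 0 < (k i : ℕ) ∧ 2 * (k i : ℕ) < n i)))) =
      (univ.image fun (k : ∀ i, Fin (n i + 1)) i => coordInv (n i) (k i)).image unorderedInv := by
  rw [image_image]
  congr 1
  funext k
  simp [unorderedInv, coordInv]

end HEF

theorem count_iso_classes_HEF_general
    (r : ℕ) (n : Fin r → ℕ) (hn : ∀ i, 2 ≤ n i) :
    (Finset.image
        (fun k : (∀ i : Fin r, Fin (n i + 1)) =>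
          ((fun i : Fin r => min ((k i : ℕ)) (n i - (k i : ℕ))),
            s((Finset.univ.filter fun i : Fin r => n i < 2 * (k i : ℕ) ∧ (k i : ℕ) < n i),
              (Finset.univ.filter fun i : Fin r => 0 < (k i : ℕ) ∧ 2 * (k i : ℕ) < n i))))
        Finset.univ).card =
      2 ^ (Finset.univ.filter fun i : Fin r => Even (n i)).card +
        ∑ K ∈ Finset.univ.powerset.filter (fun K : Finset (Fin r) => K.Nonempty),
          2 ^ ((Finset.univ.filter fun i : Fin r => Even (n i)).card +
              (K ∩ Finset.univ.filter fun i : Fin r => Odd (n i)).card - 1) *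
            ∏ i ∈ K, (n i - 1) / 2 := by
  apply Nat.eq_of_mul_eq_mul_left two_pos
  rw [HEF.image_invariant_eq_image_unorderedInv, HEF.two_mul_card_image_unorderedInv n hn,
    HEF.two_mul_count_formula n fun i => one_le_two.trans (hn i)]

/-- Number of isomorphism classes in `HEF(R,W)` for a critically-finite
`W = p₁^{n₁}⋯p_r^{n_r}` (nᵢ ≥ 2). Divisors of `W` up to units correspond to exponent vectors
`k` with `k i ≤ n i`, and isomorphism classes in the ℤ₂-graded category `HEF(R,W)` correspond to
distinct values of the unordered invariant `k ↦ (m(k), {X(k), Y(k)})`, where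
`m(k) i = min (k i) (n i - k i)`, `X(k) = {i | n i < 2*(k i) ∧ k i < n i}` and
`Y(k) = {i | 0 < k i ∧ 2*(k i) < n i}`. Their number is
`2^{|I⁰|} + Σ_{∅ ≠ K ⊆ Fin r} 2^{|I⁰| + |K ∩ I¹| − 1} ∏_{i ∈ K} ⌊(n i − 1)/2⌋`, where
`I⁰`, `I¹` are the sets of indices with even resp. odd `n i`. -/
theorem count_iso_classes_HEF
    (r : ℕ) (hr : 1 ≤ r) (n : Fin r → ℕ) (hn : ∀ i, 2 ≤ n i) :
    (Finset.image
        (fun k : (∀ i : Fin r, Fin (n i + 1)) =>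
          ((fun i : Fin r => min ((k i : ℕ)) (n i - (k i : ℕ))),
            s((Finset.univ.filter fun i : Fin r => n i < 2 * (k i : ℕ) ∧ (k i : ℕ) < n i),
              (Finset.univ.filter fun i : Fin r => 0 < (k i : ℕ) ∧ 2 * (k i : ℕ) < n i))))
        Finset.univ).card =
      2 ^ (Finset.univ.filter fun i : Fin r => Even (n i)).card +
        ∑ K ∈ Finset.univ.powerset.filter (fun K : Finset (Fin r) => K.Nonempty),
          2 ^ ((Finset.univ.filter fun i : Fin r => Even (n i)).card +
              (K ∩ Finset.univ.filter fun i : Fin r => Odd (n i)).card - 1) *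
            ∏ i ∈ K, (n i - 1) / 2 :=
  count_iso_classes_HEF_general r n hn
end

section
/- Fix r ≥ 1 and n : Fin r → ℕ with n i ≥ 2 for all i. For an exponent vector k : Fin r → ℕ with k i ≤ n i for all i, define m(k) i = min (k i) (n i − k i), X(k) = {i | n i < 2·(k i) ∧ k i < n i}, and Y(k) = {i | 0 < k i ∧ 2·(k i) < n i}. Let I⁰ = {i | n i is even} and I¹ = {i | n i is odd}. Then the number of distinct values of the ordered invariant k ↦ (m(k), X(k), Y(k)), as k ranges over all exponent vectors, equals Σ_{K ⊆ Fin r} 2^{|I⁰| + |K ∩ I¹|} · ∏_{i ∈ K} ⌊(n i − 1)/2⌋ (the K = ∅ term being 2^{|I⁰|}). (By completeness of the ordered divisorial invariant, this is the number Ň(R,W) of isomorphism classes of elementary matrix factorizations in the even homotopy category hef(R,W) for a critically-finite W = p₁^{n₁}···p_r^{n_r} over a Bézout domain R with pairwise non-associated primes p_i.) -/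
private lemma coord_eq (nn a b : ℕ) (h : b = if a = nn then 0 else a) :
    min a (nn - a) = min b (nn - b) ∧
    ((nn < 2 * a ∧ a < nn) ↔ (nn < 2 * b ∧ b < nn)) ∧
    ((0 < a ∧ 2 * a < nn) ↔ (0 < b ∧ 2 * b < nn)) := by
  split at h <;> omega

private lemma coord_inj (nn a b : ℕ) (ha : a < nn) (hb : b < nn)
    (h1 : min a (nn - a) = min b (nn - b))
    (h2 : (nn < 2 * a ∧ a < nn) ↔ (nn < 2 * b ∧ b < nn))
    (h3 : (0 < a ∧ 2 * a < nn) ↔ (0 < b ∧ 2 * b < nn)) : a = b := by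
  omega

/-- Number of isomorphism classes in `hef(R,W)` for a critically-finite
`W = p₁^{n₁}⋯p_r^{n_r}` (nᵢ ≥ 2). Divisors of `W` up to units correspond to exponent vectors
`k` with `k i ≤ n i`, and isomorphism classes in the even homotopy category `hef(R,W)`
correspond to distinct values of the ordered invariant `k ↦ (m(k), X(k), Y(k))`, where
`m(k) i = min (k i) (n i - k i)`, `X(k) = {i | n i < 2*(k i) ∧ k i < n i}` and
`Y(k) = {i | 0 < k i ∧ 2*(k i) < n i}`. Their number is
`Σ_{K ⊆ Fin r} 2^{|I⁰| + |K ∩ I¹|} ∏_{i ∈ K} ⌊(n i − 1)/2⌋`, where `I⁰`, `I¹` are the sets of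
indices with even resp. odd `n i` (the `K = ∅` term being `2^{|I⁰|}`). -/
theorem count_iso_classes_hef
    (r : ℕ) (hr : 1 ≤ r) (n : Fin r → ℕ) (hn : ∀ i, 2 ≤ n i) :
    (Finset.image
        (fun k : (∀ i : Fin r, Fin (n i + 1)) =>
          ((fun i : Fin r => min ((k i : ℕ)) (n i - (k i : ℕ))),
            (Finset.univ.filter fun i : Fin r => n i < 2 * (k i : ℕ) ∧ (k i : ℕ) < n i),
            (Finset.univ.filter fun i : Fin r => 0 < (k i : ℕ) ∧ 2 * (k i : ℕ) < n i)))
        Finset.univ).card =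
      ∑ K ∈ Finset.univ.powerset,
        2 ^ ((Finset.univ.filter fun i : Fin r => Even (n i)).card +
            (K ∩ Finset.univ.filter fun i : Fin r => Odd (n i)).card) *
          ∏ i ∈ K, (n i - 1) / 2 := by
  classical
  set F : (∀ i : Fin r, Fin (n i + 1)) → (Fin r → ℕ) × Finset (Fin r) × Finset (Fin r) :=
    fun k : (∀ i : Fin r, Fin (n i + 1)) =>
      ((fun i : Fin r => min ((k i : ℕ)) (n i - (k i : ℕ))),
        (Finset.univ.filter fun i : Fin r => n i < 2 * (k i : ℕ) ∧ (k i : ℕ) < n i),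
        (Finset.univ.filter fun i : Fin r => 0 < (k i : ℕ) ∧ 2 * (k i : ℕ) < n i)) with hF
  set G : (∀ i : Fin r, Fin (n i)) → (∀ i : Fin r, Fin (n i + 1)) :=
    fun k i => (k i).castSucc with hG
  -- the left-hand side equals ∏ i, n i
  have hL : (Finset.image F Finset.univ).card = ∏ i : Fin r, n i := by
    have himg : Finset.image F Finset.univ = Finset.image (fun k => F (G k)) Finset.univ := by
      apply Finset.Subset.antisymm
      · intro v hv
        simp only [Finset.mem_image, Finset.mem_univ, true_and] at hv ⊢
        obtain ⟨k, rfl⟩ := hv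
        obtain ⟨k', hk'⟩ : ∃ k' : ∀ i : Fin r, Fin (n i),
            ∀ i, ((G k' i : ℕ)) = if (k i : ℕ) = n i then 0 else (k i : ℕ) := by
          refine ⟨fun i => if h : (k i : ℕ) = n i then ⟨0, by have := hn i; omega⟩
            else ⟨(k i : ℕ), lt_of_le_of_ne (Nat.lt_succ_iff.mp (k i).isLt) h⟩, fun i => ?_⟩
          simp only [hG, Fin.coe_castSucc]
          split <;> simp_all
        refine ⟨k', ?_⟩
        simp only [hF]
        refine Prod.ext ?_ (Prod.ext ?_ ?_)
        · funext i
          exact ((coord_eq (n i) (k i : ℕ) (G k' i : ℕ) (hk' i)).1).symm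
        · ext i
          simp only [Finset.mem_filter, Finset.mem_univ, true_and]
          exact ((coord_eq (n i) (k i : ℕ) (G k' i : ℕ) (hk' i)).2.1).symm
        · ext i
          simp only [Finset.mem_filter, Finset.mem_univ, true_and]
          exact ((coord_eq (n i) (k i : ℕ) (G k' i : ℕ) (hk' i)).2.2).symm
      · intro v hv
        simp only [Finset.mem_image, Finset.mem_univ, true_and] at hv ⊢
        obtain ⟨k, rfl⟩ := hv
        exact ⟨G k, rfl⟩
    have hinj : Function.Injective (fun k => F (G k)) := by
      intro k1 k2 h
      simp only [hF, Prod.mk.injEq] at h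
      funext i
      apply Fin.ext
      have h1 := congrFun h.1 i
      have h2 := Finset.ext_iff.mp h.2.1 i
      have h3 := Finset.ext_iff.mp h.2.2 i
      simp only [Finset.mem_filter, Finset.mem_univ, true_and] at h2 h3
      have hb1 : ((G k1 i : ℕ)) < n i := by simp [hG]
      have hb2 : ((G k2 i : ℕ)) < n i := by simp [hG]
      have := coord_inj (n i) (G k1 i : ℕ) (G k2 i : ℕ) hb1 hb2 h1 h2 h3
      simpa [hG] using this
    rw [himg, Finset.card_image_of_injective _ hinj, Finset.card_univ]
    simp
  -- the right-hand side equals ∏ i, n i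
  have hR : (∑ K ∈ (Finset.univ : Finset (Fin r)).powerset,
        2 ^ ((Finset.univ.filter fun i : Fin r => Even (n i)).card +
            (K ∩ Finset.univ.filter fun i : Fin r => Odd (n i)).card) *
          ∏ i ∈ K, (n i - 1) / 2) = ∏ i : Fin r, n i := by
    have hterm : ∀ K : Finset (Fin r),
        2 ^ ((Finset.univ.filter fun i : Fin r => Even (n i)).card +
            (K ∩ Finset.univ.filter fun i : Fin r => Odd (n i)).card) *
          ∏ i ∈ K, (n i - 1) / 2
        = (∏ i : Fin r, (if Even (n i) then 2 else 1)) *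
          ∏ i ∈ K, ((if Odd (n i) then 2 else 1) * ((n i - 1) / 2)) := by
      intro K
      have he : (2 : ℕ) ^ (Finset.univ.filter fun i : Fin r => Even (n i)).card
          = ∏ i : Fin r, (if Even (n i) then 2 else 1) := by
        rw [← Finset.prod_filter, Finset.prod_const]
      have hKint : K ∩ (Finset.univ.filter fun i : Fin r => Odd (n i))
          = K.filter fun i : Fin r => Odd (n i) := by
        ext i; simp [Finset.mem_inter, Finset.mem_filter]
      have ho : (2 : ℕ) ^ (K ∩ Finset.univ.filter fun i : Fin r => Odd (n i)).card
          = ∏ i ∈ K, (if Odd (n i) then 2 else 1) := by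
        rw [hKint, ← Finset.prod_filter, Finset.prod_const]
      rw [pow_add, he, ho, Finset.prod_mul_distrib]
      ring
    rw [Finset.sum_congr rfl (fun K _ => hterm K), ← Finset.mul_sum]
    have hsum : (∏ i : Fin r, (((if Odd (n i) then 2 else 1) * ((n i - 1) / 2)) + 1))
        = ∑ K ∈ (Finset.univ : Finset (Fin r)).powerset,
            ∏ i ∈ K, ((if Odd (n i) then 2 else 1) * ((n i - 1) / 2)) := by
      rw [Finset.prod_add]
      simp
    rw [← hsum, ← Finset.prod_mul_distrib]
    apply Finset.prod_congr rfl
    intro i _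
    have h2 := hn i
    rcases Nat.even_or_odd (n i) with h | h
    · have hodd : ¬ Odd (n i) := by simpa [Nat.not_odd_iff_even] using h
      have : n i % 2 = 0 := Nat.even_iff.mp h
      simp only [if_pos h, if_neg hodd]
      omega
    · have heven : ¬ Even (n i) := by simpa [Nat.not_even_iff_odd] using h
      have : n i % 2 = 1 := Nat.odd_iff.mp h
      simp only [if_neg heven, if_pos h]
      omega
  rw [hL, ← hR]
end

section
/- Fix r ≥ 1 and n : Fin r → ℕ with n i ≥ 2 for all i. For an exponent vector k : Fin r → ℕ with k i ≤ n i for all i, define m(k) i = min (k i) (n i − k i), X(k) = {i | n i < 2·(k i) ∧ k i < n i}, and Y(k) = {i | 0 < k i ∧ 2·(k i) < n i}. Call k essential if every i with m(k) i ≥ 1 belongs to X(k) ∪ Y(k) (equivalently, there is no i with 2·(k i) = n i and k i > 0). Then the number of distinct values of the unordered invariant k ↦ (m(k), {X(k), Y(k)}), as k ranges over all essential exponent vectors, equals 1 + Σ_{∅ ≠ K ⊆ Fin r} 2^{|K| − 1} · ∏_{i ∈ K} ⌊(n i − 1)/2⌋. (This is the number N_∅(R,W) of isomorphism classes of essential elementary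 factorizations in HEF(R,W) for a critically-finite W = p₁^{n₁}···p_r^{n_r} over a Bézout domain R.) -/
open Finset

private lemma pair_image_card {α : Type*} [DecidableEq α] (K : Finset α) (hK : K.Nonempty) :
    (K.powerset.image fun X => s(X, K \ X)).card = 2 ^ (K.card - 1) := by
  obtain ⟨a, ha⟩ := hK
  have himg : K.powerset.image (fun X => s(X, K \ X))
      = (K.erase a).powerset.image (fun X => s(X, K \ X)) := by
    apply Finset.Subset.antisymm
    · intro p hp
      simp only [mem_image, mem_powerset] at hp ⊢
      obtain ⟨X, hX, rfl⟩ := hp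
      by_cases haX : a ∈ X
      · refine ⟨K \ X, ?_, ?_⟩
        · intro x hx
          simp only [mem_sdiff] at hx
          exact mem_erase.2 ⟨fun h => hx.2 (h ▸ haX), hx.1⟩
        · rw [Finset.sdiff_sdiff_eq_self hX, Sym2.eq_swap]
      · exact ⟨X, fun x hx => mem_erase.2 ⟨fun h => haX (h ▸ hx), hX hx⟩, rfl⟩
    · exact image_subset_image (powerset_mono.2 (erase_subset _ _))
  rw [himg, Finset.card_image_of_injOn, card_powerset, card_erase_of_mem ha]
  intro X hX X' hX' h
  simp only [mem_coe, mem_powerset] at hX hX'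
  rw [Sym2.eq_iff] at h
  rcases h with ⟨h1, _⟩ | ⟨h1, h2⟩
  · exact h1
  · exfalso
    have haX' : a ∈ K \ X' := mem_sdiff.2 ⟨ha, fun h => (mem_erase.1 (hX' h)).1 rfl⟩
    rw [← h1] at haX'
    exact (mem_erase.1 (hX haX')).1 rfl


/-- Number of isomorphism classes of *essential* elementary factorizations in
`HEF(R,W)` for a critically-finite `W = p₁^{n₁}⋯p_r^{n_r}` (nᵢ ≥ 2). An exponent vector `k`
(with `k i ≤ n i`) is essential if every `i` with `m(k) i ≥ 1` lies in `X(k) ∪ Y(k)`, where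
`m(k) i = min (k i) (n i - k i)`, `X(k) = {i | n i < 2*(k i) ∧ k i < n i}` and
`Y(k) = {i | 0 < k i ∧ 2*(k i) < n i}`. The number of distinct values of the unordered
invariant `k ↦ (m(k), {X(k), Y(k)})` on essential exponent vectors is
`1 + Σ_{∅ ≠ K ⊆ Fin r} 2^{|K| − 1} ∏_{i ∈ K} ⌊(n i − 1)/2⌋`. -/
theorem count_iso_classes_essential
    (r : ℕ) (hr : 1 ≤ r) (n : Fin r → ℕ) (hn : ∀ i, 2 ≤ n i) :
    (Finset.image
        (fun k : (∀ i : Fin r, Fin (n i + 1)) =>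
          ((fun i : Fin r => min ((k i : ℕ)) (n i - (k i : ℕ))),
            s((Finset.univ.filter fun i : Fin r => n i < 2 * (k i : ℕ) ∧ (k i : ℕ) < n i),
              (Finset.univ.filter fun i : Fin r => 0 < (k i : ℕ) ∧ 2 * (k i : ℕ) < n i))))
        (Finset.univ.filter
          (fun k : (∀ i : Fin r, Fin (n i + 1)) =>
            ∀ i : Fin r, 1 ≤ min ((k i : ℕ)) (n i - (k i : ℕ)) →
              ((n i < 2 * (k i : ℕ) ∧ (k i : ℕ) < n i) ∨
                (0 < (k i : ℕ) ∧ 2 * (k i : ℕ) < n i))))).card =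
      1 + ∑ K ∈ Finset.univ.powerset.filter (fun K : Finset (Fin r) => K.Nonempty),
            2 ^ (K.card - 1) * ∏ i ∈ K, (n i - 1) / 2 := by
  classical
  set q : Fin r → ℕ := fun i => (n i - 1) / 2 with hqdef
  set Mset : Finset (Fin r) → Finset (Fin r → ℕ) :=
    fun K => Fintype.piFinset (fun i => if i ∈ K then Finset.Icc 1 (q i) else {0}) with hMdef
  set AK : Finset (Fin r) → Finset ((Fin r → ℕ) × Sym2 (Finset (Fin r))) :=
    fun K => (Mset K) ×ˢ (K.powerset.image fun X => s(X, K \ X)) with hAKdef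
  -- membership in Mset
  have hMmem : ∀ (K : Finset (Fin r)) (m : Fin r → ℕ),
      m ∈ Mset K ↔ ∀ i, (i ∈ K → 1 ≤ m i ∧ m i ≤ q i) ∧ (i ∉ K → m i = 0) := by
    intro K m
    rw [hMdef]
    simp only [Fintype.mem_piFinset]
    constructor
    · intro h i
      have hi := h i
      constructor
      · intro hiK; simpa [hiK, Finset.mem_Icc] using hi
      · intro hiK; simpa [hiK] using hi
    · intro h i
      by_cases hiK : i ∈ K
      · simpa [hiK, Finset.mem_Icc] using (h i).1 hiK
      · simpa [hiK] using (h i).2 hiK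
  -- Step 1 : the image equals the disjoint union
  have himage : (Finset.image
        (fun k : (∀ i : Fin r, Fin (n i + 1)) =>
          ((fun i : Fin r => min ((k i : ℕ)) (n i - (k i : ℕ))),
            s((Finset.univ.filter fun i : Fin r => n i < 2 * (k i : ℕ) ∧ (k i : ℕ) < n i),
              (Finset.univ.filter fun i : Fin r => 0 < (k i : ℕ) ∧ 2 * (k i : ℕ) < n i))))
        (Finset.univ.filter
          (fun k : (∀ i : Fin r, Fin (n i + 1)) =>
            ∀ i : Fin r, 1 ≤ min ((k i : ℕ)) (n i - (k i : ℕ)) →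
              ((n i < 2 * (k i : ℕ) ∧ (k i : ℕ) < n i) ∨
                (0 < (k i : ℕ) ∧ 2 * (k i : ℕ) < n i)))))
      = Finset.univ.powerset.biUnion AK := by
    ext p
    simp only [Finset.mem_image, Finset.mem_filter, Finset.mem_biUnion, Finset.mem_powerset,
      Finset.mem_univ, true_and]
    constructor
    · rintro ⟨k, hess, rfl⟩
      set X : Finset (Fin r) :=
        Finset.univ.filter (fun i : Fin r => n i < 2 * (k i : ℕ) ∧ (k i : ℕ) < n i) with hXdef
      set Y : Finset (Fin r) :=
        Finset.univ.filter (fun i : Fin r => 0 < (k i : ℕ) ∧ 2 * (k i : ℕ) < n i) with hYdef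
      have hXmem : ∀ i, i ∈ X ↔ (n i < 2 * (k i : ℕ) ∧ (k i : ℕ) < n i) := by
        intro i; simp [hXdef]
      have hYmem : ∀ i, i ∈ Y ↔ (0 < (k i : ℕ) ∧ 2 * (k i : ℕ) < n i) := by
        intro i; simp [hYdef]
      refine ⟨X ∪ Y, Finset.subset_univ _, ?_⟩
      rw [hAKdef]
      simp only [Finset.mem_product]
      constructor
      · rw [hMmem]
        intro i
        have hkle : (k i : ℕ) ≤ n i := by
          have := (k i).isLt; omega
        have hni := hn i
        constructor
        · intro hiK
          rcases Finset.mem_union.1 hiK with hiX | hiY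
          · rw [hXmem] at hiX
            simp only [hqdef]
            omega
          · rw [hYmem] at hiY
            simp only [hqdef]
            omega
        · intro hiK
          rw [Finset.mem_union, hXmem, hYmem] at hiK
          by_contra hne
          have h1 : 1 ≤ min ((k i : ℕ)) (n i - (k i : ℕ)) := by omega
          exact hiK (hess i h1)
      · refine Finset.mem_image.2 ⟨X, Finset.mem_powerset.2 Finset.subset_union_left, ?_⟩
        have hYeq : (X ∪ Y) \ X = Y := by
          ext i
          simp only [Finset.mem_sdiff, Finset.mem_union, hXmem, hYmem]
          constructor
          · rintro ⟨h | h, h2⟩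
            · exact absurd h h2
            · exact h
          · intro h
            refine ⟨Or.inr h, ?_⟩
            intro h'
            omega
        rw [hYeq]
    · rintro ⟨K, -, hp⟩
      rw [hAKdef] at hp
      simp only [Finset.mem_product, Finset.mem_image, Finset.mem_powerset] at hp
      obtain ⟨hm, X, hXK, hs⟩ := hp
      set m := p.1 with hmdef
      rw [hMmem] at hm
      have hbnd : ∀ i, (if i ∈ X then n i - m i else m i) < n i + 1 := by
        intro i
        have hni := hn i
        by_cases hiK : i ∈ K
        · have hmi := (hm i).1 hiK
          have hq2 : 2 * m i ≤ n i - 1 := by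
            have := hmi.2
            simp only [hqdef] at this
            omega
          by_cases hiX : i ∈ X <;> simp only [hiX, if_true, if_false] <;> omega
        · have h0 := (hm i).2 hiK
          have hiX : i ∉ X := fun h => hiK (hXK h)
          simp only [hiX, if_false, h0]
          omega
      refine ⟨fun i => ⟨if i ∈ X then n i - m i else m i, hbnd i⟩, ?_, ?_⟩
      · -- essentiality
        intro i hi
        simp only at hi ⊢
        have hni := hn i
        by_cases hiK : i ∈ K
        · have hmi := (hm i).1 hiK
          have hq2 : 2 * m i ≤ n i - 1 := by
            have := hmi.2
            simp only [hqdef] at this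
            omega
          by_cases hiX : i ∈ X
          · simp only [hiX, if_true] at hi ⊢
            left; omega
          · simp only [hiX, if_false] at hi ⊢
            right; omega
        · have h0 := (hm i).2 hiK
          have hiX : i ∉ X := fun h => hiK (hXK h)
          simp only [hiX, if_false, h0] at hi
          omega
      · -- the invariant value
        have hval : ∀ i, min ((if i ∈ X then n i - m i else m i) : ℕ)
            (n i - (if i ∈ X then n i - m i else m i)) = m i := by
          intro i
          have hni := hn i
          by_cases hiK : i ∈ K
          · have hmi := (hm i).1 hiK
            have hq2 : 2 * m i ≤ n i - 1 := by
              have := hmi.2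
              simp only [hqdef] at this
              omega
            by_cases hiX : i ∈ X <;> simp only [hiX, if_true, if_false] <;> omega
          · have h0 := (hm i).2 hiK
            have hiX : i ∉ X := fun h => hiK (hXK h)
            simp only [hiX, if_false, h0]
            omega
        have hXeq : (Finset.univ.filter fun i : Fin r =>
            n i < 2 * ((if i ∈ X then n i - m i else m i) : ℕ) ∧
              ((if i ∈ X then n i - m i else m i) : ℕ) < n i) = X := by
          ext i
          simp only [Finset.mem_filter, Finset.mem_univ, true_and]
          have hni := hn i
          by_cases hiX : i ∈ X
          · have hmi := (hm i).1 (hXK hiX)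
            have hq2 : 2 * m i ≤ n i - 1 := by
              have := hmi.2; simp only [hqdef] at this; omega
            simp only [hiX, if_true, iff_true]
            omega
          · simp only [hiX, if_false, iff_false]
            by_cases hiK : i ∈ K
            · have hmi := (hm i).1 hiK
              have hq2 : 2 * m i ≤ n i - 1 := by
                have := hmi.2; simp only [hqdef] at this; omega
              omega
            · have h0 := (hm i).2 hiK
              omega
        have hYeq : (Finset.univ.filter fun i : Fin r =>
            0 < ((if i ∈ X then n i - m i else m i) : ℕ) ∧
              2 * ((if i ∈ X then n i - m i else m i) : ℕ) < n i) = K \ X := by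
          ext i
          simp only [Finset.mem_filter, Finset.mem_univ, true_and, Finset.mem_sdiff]
          have hni := hn i
          by_cases hiX : i ∈ X
          · have hmi := (hm i).1 (hXK hiX)
            have hq2 : 2 * m i ≤ n i - 1 := by
              have := hmi.2; simp only [hqdef] at this; omega
            constructor
            · intro h
              simp only [hiX, if_true] at h
              omega
            · rintro ⟨-, h⟩
              exact absurd hiX h
          · simp only [hiX, if_false]
            by_cases hiK : i ∈ K
            · have hmi := (hm i).1 hiK
              have hq2 : 2 * m i ≤ n i - 1 := by
                have := hmi.2; simp only [hqdef] at this; omega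
              simp [hiK, hiX]
              omega
            · have h0 := (hm i).2 hiK
              simp [hiK, h0]
        have : p = (m, s(X, K \ X)) := by
          rw [hmdef]
          exact Prod.ext rfl hs.symm
        rw [this]
        refine Prod.ext ?_ ?_
        · funext i
          simpa using hval i
        · simp only
          rw [hXeq, hYeq]
  rw [himage]
  -- disjointness
  have hdisj : ∀ K ∈ Finset.univ.powerset, ∀ K' ∈ (Finset.univ.powerset : Finset (Finset (Fin r))),
      K ≠ K' → Disjoint (AK K) (AK K') := by
    intro K _ K' _ hne
    rw [Finset.disjoint_left]
    intro p hp hp'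
    apply hne
    rw [hAKdef] at hp hp'
    simp only [Finset.mem_product] at hp hp'
    have h1 := (hMmem K p.1).1 hp.1
    have h2 := (hMmem K' p.1).1 hp'.1
    ext i
    constructor
    · intro hiK
      by_contra hiK'
      have := ((h1 i).1 hiK).1
      have := (h2 i).2 hiK'
      omega
    · intro hiK'
      by_contra hiK
      have := ((h2 i).1 hiK').1
      have := (h1 i).2 hiK
      omega
  rw [Finset.card_biUnion hdisj]
  -- per-K cards
  have hMcard : ∀ K : Finset (Fin r), (Mset K).card = ∏ i ∈ K, q i := by
    intro K
    rw [hMdef]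
    simp only
    rw [Fintype.card_piFinset]
    have : ∀ i : Fin r, ((if i ∈ K then Finset.Icc 1 (q i) else {0}) : Finset ℕ).card
        = if i ∈ K then q i else 1 := by
      intro i
      by_cases hiK : i ∈ K <;> simp [hiK, Nat.card_Icc]
    rw [Finset.prod_congr rfl fun i _ => this i, Finset.prod_ite_mem, Finset.univ_inter]
  have hAKcard : ∀ K : Finset (Fin r),
      (AK K).card = (∏ i ∈ K, q i) * (if K = ∅ then 1 else 2 ^ (K.card - 1)) := by
    intro K
    rw [hAKdef]
    simp only [Finset.card_product]
    rw [hMcard]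
    congr 1
    by_cases hK : K = ∅
    · subst hK
      simp
    · rw [if_neg hK]
      exact pair_image_card K (Finset.nonempty_iff_ne_empty.2 hK)
  rw [Finset.sum_congr rfl fun K _ => hAKcard K]
  rw [← Finset.sum_filter_add_sum_filter_not Finset.univ.powerset (fun K => K = ∅)]
  have hfilt : (Finset.univ.powerset.filter fun K : Finset (Fin r) => K = ∅) = {∅} := by
    ext K
    simp [Finset.mem_filter]
  have hfilt2 : (Finset.univ.powerset.filter fun K : Finset (Fin r) => ¬ K = ∅)
      = Finset.univ.powerset.filter (fun K : Finset (Fin r) => K.Nonempty) := by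
    ext K
    simp [Finset.nonempty_iff_ne_empty]
  rw [hfilt, hfilt2, Finset.sum_singleton]
  simp only [if_pos rfl, Finset.prod_empty, one_mul]
  congr 1
  apply Finset.sum_congr rfl
  intro K hK
  rw [Finset.mem_filter] at hK
  rw [if_neg (Finset.nonempty_iff_ne_empty.1 hK.2), mul_comm]
end
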